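/- arXiv:1501.02151 — 4 statements merged into one kernel-verified Lean document; each statement's English description precedes it below -/
import Mathlib

section
/- Let X_k = a_k X_{k-1} + u_k be a PAR(1) time series with periodic coefficients of period P, φ = ∏_{r=1}^P a_r with |φ| > 1, X_0 square-integrable, and {u_k} centered periodically distributed with second moments. Then for each r = 1,…,P, φ^{-n} X_{nP+r} converges almost surely and in quadratic mean to A_1^r (X_0 + ζ), where ζ = lim_n ∑_{l=0}^{n} φ^{-l-1} U_l^{(P)} (limit a.s. and in L²). -/
/-!
Iterating the recursion over one period gives `X_{(n+1)P} = φ X_{nP} + U_n^{(P)}`, hence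
`φ^{-(n+1)} X_{(n+1)P} = X_0 + Z_n` and
`φ^{-(n+1)} X_{(n+1)P+r} = A_1^r (X_0 + Z_n) + φ^{-(n+1)} U_{n+1}^{(r)}`.
Since the innovations are periodically distributed, `‖U_n^{(r)}‖₂` is bounded uniformly in `n`,
so the terms of `Z_n` and the remainders `φ^{-(n+1)} U_{n+1}^{(r)}` have geometrically decaying
`L²` norms. A series whose terms have summable `Lᵖ` norms converges a.e. and in `Lᵖ` (by Fatou's
lemma applied to the tails), and its terms tend to zero in both senses.
-/

open MeasureTheory ProbabilityTheory Filter Topology Finset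
open scoped ENNReal

namespace MeasureTheory

variable {Ω E : Type*} [MeasurableSpace Ω] {μ : Measure Ω} [NormedAddCommGroup E]
  {p : ℝ≥0∞} {f : ℕ → Ω → E}

theorem ae_summable_of_tsum_eLpNorm_ne_top [CompleteSpace E] (hp : 1 ≤ p)
    (hf : ∀ n, AEStronglyMeasurable (f n) μ) (hsum : ∑' n, eLpNorm (f n) p μ ≠ ∞) :
    ∀ᵐ ω ∂μ, Summable fun n => f n ω :=
  (summable_norm_of_tsum_eLpNorm_ne_top hp hf hsum).mono fun _ h => h.of_norm

theorem eLpNorm_tsum_sub_sum_range_le (hp : 1 ≤ p) (hf : ∀ n, AEStronglyMeasurable (f n) μ)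
    (hsumm : ∀ᵐ ω ∂μ, Summable fun n => f n ω) (n : ℕ) :
    eLpNorm (fun ω => ∑' k, f k ω - ∑ k ∈ range n, f k ω) p μ
      ≤ ∑' k, eLpNorm (f (k + n)) p μ := by
  refine Lp.eLpNorm_le_of_ae_tendsto (f := fun m => ∑ k ∈ range m, f (k + n)) (u := atTop)
    (.of_forall fun m => ?_) (fun m => Finset.aestronglyMeasurable_sum _ fun k _ => hf _) ?_
  · exact (eLpNorm_sum_le (fun k _ => hf _) hp).trans (ENNReal.sum_le_tsum _)
  · filter_upwards [hsumm] with ω hω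
    simp only [Finset.sum_apply]
    rw [← hω.sum_add_tsum_nat_add n, add_sub_cancel_left]
    exact ((summable_nat_add_iff n).2 hω).hasSum.tendsto_sum_nat

theorem memLp_tsum_and_tendsto_sum_range [CompleteSpace E] (hp : 1 ≤ p)
    (hf : ∀ n, AEStronglyMeasurable (f n) μ) (hsum : ∑' n, eLpNorm (f n) p μ ≠ ∞) :
    MemLp (fun ω => ∑' n, f n ω) p μ ∧
      (∀ᵐ ω ∂μ, Tendsto (fun n => ∑ k ∈ range n, f k ω) atTop (𝓝 (∑' k, f k ω))) ∧
      Tendsto (fun n => eLpNorm (fun ω => ∑ k ∈ range n, f k ω - ∑' k, f k ω) p μ)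
        atTop (𝓝 0) := by
  have hsumm := ae_summable_of_tsum_eLpNorm_ne_top hp hf hsum
  have hlim : ∀ᵐ ω ∂μ, Tendsto (fun n => ∑ k ∈ range n, f k ω) atTop (𝓝 (∑' k, f k ω)) :=
    hsumm.mono fun ω hω => hω.hasSum.tendsto_sum_nat
  have hmeas : AEStronglyMeasurable (fun ω => ∑' n, f n ω) μ :=
    aestronglyMeasurable_of_tendsto_ae atTop
      (fun n => Finset.aestronglyMeasurable_fun_sum _ fun k _ => hf k) hlim
  refine ⟨⟨hmeas, ?_⟩, hlim, ?_⟩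
  · have h0 := eLpNorm_tsum_sub_sum_range_le hp hf hsumm 0
    simp only [range_zero, sum_empty, sub_zero, add_zero] at h0
    exact h0.trans_lt hsum.lt_top
  · refine tendsto_of_tendsto_of_tendsto_of_le_of_le tendsto_const_nhds
      (ENNReal.tendsto_sum_nat_add _ hsum) (fun n => zero_le) fun n => ?_
    exact (eLpNorm_sub_comm (fun ω => ∑ k ∈ range n, f k ω) (fun ω => ∑' k, f k ω) p μ).trans_le
      (eLpNorm_tsum_sub_sum_range_le hp hf hsumm n)

theorem tsum_eLpNorm_inv_pow_mul_ne_top {φ : ℝ} (hφ : 1 < |φ|) {V : ℕ → Ω → ℝ} {M : ℝ≥0∞}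
    (hM : M ≠ ∞) (hV : ∀ n, eLpNorm (V n) p μ ≤ M) :
    ∑' n, eLpNorm (fun ω => (φ ^ (n + 1))⁻¹ * V n ω) p μ ≠ ∞ := by
  have hφ0 : φ ≠ 0 := abs_pos.mp (one_pos.trans hφ)
  have hq : ‖φ⁻¹‖ₑ < 1 := by
    simpa [enorm_inv hφ0, ENNReal.inv_lt_one, ← ofReal_norm] using hφ
  have hterm : ∀ n, eLpNorm (fun ω => (φ ^ (n + 1))⁻¹ * V n ω) p μ ≤ ‖φ⁻¹‖ₑ ^ n * M := fun n => by
    rw [show (fun ω => (φ ^ (n + 1))⁻¹ * V n ω) = φ⁻¹ ^ (n + 1) • V n by ext; simp [inv_pow],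
      eLpNorm_const_smul, enorm_pow, pow_succ, mul_assoc]
    gcongr
    exact (mul_le_of_le_one_left zero_le hq.le).trans (hV n)
  refine ne_top_of_le_ne_top ?_ (ENNReal.tsum_le_tsum hterm)
  rw [ENNReal.tsum_mul_right, ENNReal.tsum_geometric]
  exact ENNReal.mul_ne_top (ENNReal.inv_ne_top.2 (tsub_pos_of_lt hq).ne') hM

theorem integral_sq_eq_lpNorm_sq {g : Ω → ℝ} (hg : AEStronglyMeasurable g μ) :
    ∫ ω, g ω ^ 2 ∂μ = lpNorm g 2 μ ^ 2 := by
  rw [lpNorm_eq_integral_norm_rpow_toReal two_ne_zero ENNReal.ofNat_ne_top hg,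
    ← Real.rpow_natCast, ← Real.rpow_mul (integral_nonneg fun ω => by positivity)]
  norm_num

theorem tendsto_integral_sq_of_tendsto_eLpNorm {g : ℕ → Ω → ℝ}
    (hg : ∀ n, AEStronglyMeasurable (g n) μ)
    (h : Tendsto (fun n => eLpNorm (g n) 2 μ) atTop (𝓝 0)) :
    Tendsto (fun n => ∫ ω, g n ω ^ 2 ∂μ) atTop (𝓝 0) := by
  simp_rw [integral_sq_eq_lpNorm_sq (hg _), ← toReal_eLpNorm (hg _)]
  simpa using ((ENNReal.tendsto_toReal ENNReal.zero_ne_top).comp h).pow 2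

theorem ae_tendsto_and_tendsto_integral_sq_of_eq_mul_add {Y Z R : ℕ → Ω → ℝ} {W ζ : Ω → ℝ}
    (c : ℝ) (hY : ∀ n ω, Y n ω = c * (W ω + Z n ω) + R n ω)
    (hZm : ∀ n, AEStronglyMeasurable (Z n) μ) (hζm : AEStronglyMeasurable ζ μ)
    (hRm : ∀ n, AEStronglyMeasurable (R n) μ)
    (hZae : ∀ᵐ ω ∂μ, Tendsto (fun n => Z n ω) atTop (𝓝 (ζ ω)))
    (hZL2 : Tendsto (fun n => eLpNorm (fun ω => Z n ω - ζ ω) 2 μ) atTop (𝓝 0))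
    (hR : ∑' n, eLpNorm (R n) 2 μ ≠ ∞) :
    (∀ᵐ ω ∂μ, Tendsto (fun n => Y n ω) atTop (𝓝 (c * (W ω + ζ ω)))) ∧
      Tendsto (fun n => ∫ ω, (Y n ω - c * (W ω + ζ ω)) ^ 2 ∂μ) atTop (𝓝 0) := by
  constructor
  · filter_upwards [hZae, ae_summable_of_tsum_eLpNorm_ne_top one_le_two hRm hR]
      with ω hZω hRω
    simp_rw [hY]
    simpa using ((hZω.const_add _).const_mul _).add hRω.tendsto_atTop_zero
  · have hdiff : ∀ n ω, Y n ω - c * (W ω + ζ ω) = c * (Z n ω - ζ ω) + R n ω := fun n ω => by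
      rw [hY]; ring
    simp_rw [hdiff]
    refine tendsto_integral_sq_of_tendsto_eLpNorm (fun n => by fun_prop) ?_
    have hbound : ∀ n, eLpNorm (fun ω => c * (Z n ω - ζ ω) + R n ω) 2 μ
        ≤ ‖c‖ₑ * eLpNorm (fun ω => Z n ω - ζ ω) 2 μ + eLpNorm (R n) 2 μ := fun n =>
      (eLpNorm_add_le (((hZm n).sub hζm).const_smul c) (hRm n) one_le_two).trans
        (add_le_add_left (eLpNorm_const_smul_le (c := c) (f := fun ω => Z n ω - ζ ω)) _)
    refine tendsto_of_tendsto_of_tendsto_of_le_of_le tendsto_const_nhds ?_ (fun n => zero_le) hbound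
    simpa using (ENNReal.Tendsto.const_mul hZL2 (.inr enorm_ne_top)).add
      (ENNReal.tendsto_atTop_zero_of_tsum_ne_top hR)

end MeasureTheory

namespace ProbabilityTheory

variable {Ω : Type*} [MeasurableSpace Ω] {μ : Measure Ω} {P : ℕ}

theorem periodic_map_of_map_fin_eq {β : Type*} [MeasurableSpace β] {u : ℕ → Ω → β}
    (hu : ∀ k, Measurable (u k))
    (h : ∀ m : ℕ, μ.map (fun ω (i : Fin m) => u (i + P) ω) = μ.map (fun ω (i : Fin m) => u i ω)) :
    Function.Periodic (fun k => μ.map (u k)) P := by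
  intro k
  have hk := congrArg (Measure.map fun v : Fin (k + 1) → β => v (Fin.last k)) (h (k + 1))
  rwa [Measure.map_map (measurable_pi_apply _) (measurable_pi_lambda _ fun _ => hu _),
    Measure.map_map (measurable_pi_apply _) (measurable_pi_lambda _ fun _ => hu _)] at hk

theorem eLpNorm_sum_mul_le_of_periodic_map {p : ℝ≥0∞} (hp : 1 ≤ p) {u : ℕ → Ω → ℝ}
    (hu : ∀ k, Measurable (u k)) (hlaw : Function.Periodic (fun k => μ.map (u k)) P)
    (c : ℕ → ℝ) (S : Finset ℕ) (n : ℕ) :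
    eLpNorm (fun ω => ∑ s ∈ S, c s * u (n * P + s) ω) p μ
      ≤ ∑ s ∈ S, ‖c s‖ₑ * eLpNorm (u s) p μ := by
  have hident : ∀ s, IdentDistrib (u (n * P + s)) (u s) μ μ := fun s =>
    ⟨(hu _).aemeasurable, (hu _).aemeasurable, by simpa [add_comm] using hlaw.nat_mul n s⟩
  calc eLpNorm (fun ω => ∑ s ∈ S, c s * u (n * P + s) ω) p μ
      = eLpNorm (∑ s ∈ S, c s • u (n * P + s)) p μ := by
        congr 1; ext ω; simp
    _ ≤ ∑ s ∈ S, eLpNorm (c s • u (n * P + s)) p μ :=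
        eLpNorm_sum_le (fun s _ => ((hu _).const_smul _).aestronglyMeasurable) hp
    _ = ∑ s ∈ S, ‖c s‖ₑ * eLpNorm (u s) p μ := by
        simp_rw [eLpNorm_const_smul, (hident _).eLpNorm_eq]

end ProbabilityTheory

section Recurrence

variable {R : Type*} [CommSemiring R] {a v x : ℕ → R}

theorem add_eq_prod_mul_add_sum_of_recurrence
    (hrec : ∀ k, x (k + 1) = a (k + 1) * x k + v (k + 1)) (m r : ℕ) :
    x (m + r) = (∏ j ∈ Icc 1 r, a (m + j)) * x m
      + ∑ s ∈ Icc 1 r, (∏ j ∈ Icc (s + 1) r, a (m + j)) * v (m + s) := by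
  induction r with
  | zero => simp
  | succ r ih =>
    have hsum : ∑ s ∈ Icc 1 r, (∏ j ∈ Icc (s + 1) (r + 1), a (m + j)) * v (m + s)
        = a (m + (r + 1)) * ∑ s ∈ Icc 1 r, (∏ j ∈ Icc (s + 1) r, a (m + j)) * v (m + s) := by
      rw [mul_sum]
      refine sum_congr rfl fun s hs => ?_
      rw [prod_Icc_succ_top (by simpa using (mem_Icc.1 hs).2)]
      ring
    rw [← add_assoc, hrec, add_assoc, ih, prod_Icc_succ_top (by omega : 1 ≤ r + 1),
      sum_Icc_succ_top (by omega : 1 ≤ r + 1), hsum,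
      Icc_eq_empty (by omega : ¬r + 1 + 1 ≤ r + 1), prod_empty]
    ring

/-- `U_n^{(r)}`: the part of the state at time `n P + r` contributed by the innovations of the
`n`-th period. -/
def blockInnovation (a v : ℕ → R) (P n r : ℕ) : R :=
  ∑ s ∈ Icc 1 r, (∏ j ∈ Icc (s + 1) r, a j) * v (n * P + s)

theorem eq_prod_mul_add_blockInnovation {P : ℕ} (hper : Function.Periodic a P)
    (hrec : ∀ k, x (k + 1) = a (k + 1) * x k + v (k + 1)) (n r : ℕ) :
    x (n * P + r) = (∏ j ∈ Icc 1 r, a j) * x (n * P) + blockInnovation a v P n r := by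
  have ha : ∀ j, a (n * P + j) = a j := fun j => by
    rw [add_comm]; exact hper.nat_mul n j
  simp_rw [add_eq_prod_mul_add_sum_of_recurrence hrec, ha, blockInnovation]

end Recurrence

theorem inv_pow_mul_eq_add_sum {K : Type*} [Field K] {φ : K} (hφ : φ ≠ 0) {y b : ℕ → K}
    (h : ∀ n, y (n + 1) = φ * y n + b n) (n : ℕ) :
    (φ ^ n)⁻¹ * y n = y 0 + ∑ l ∈ range n, (φ ^ (l + 1))⁻¹ * b l := by
  induction n with
  | zero => simp
  | succ n ih =>
    rw [sum_range_succ, ← add_assoc, ← ih, h]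
    field_simp
    ring

theorem inv_pow_mul_eq_prod_mul_add_blockInnovation {K : Type*} [Field K] {a v x : ℕ → K}
    {P : ℕ} {φ : K} (hper : Function.Periodic a P)
    (hrec : ∀ k, x (k + 1) = a (k + 1) * x k + v (k + 1))
    (hφ : ∏ j ∈ Icc 1 P, a j = φ) (hφ0 : φ ≠ 0) (n r : ℕ) :
    (φ ^ (n + 1))⁻¹ * x ((n + 1) * P + r)
      = (∏ j ∈ Icc 1 r, a j)
          * (x 0 + ∑ l ∈ range (n + 1), (φ ^ (l + 1))⁻¹ * blockInnovation a v P l P)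
        + (φ ^ (n + 1))⁻¹ * blockInnovation a v P (n + 1) r := by
  have hperiod : ∀ n, x ((n + 1) * P) = φ * x (n * P) + blockInnovation a v P n P := fun n => by
    rw [add_mul, one_mul, eq_prod_mul_add_blockInnovation hper hrec, hφ]
  have hnorm := inv_pow_mul_eq_add_sum hφ0 (y := fun n => x (n * P)) hperiod (n + 1)
  rw [zero_mul] at hnorm
  rw [eq_prod_mul_add_blockInnovation hper hrec, ← hnorm]
  ring

theorem stmt6_general {Ω : Type*} [MeasurableSpace Ω] (μ : Measure Ω)
    (P : ℕ) (a : ℕ → ℝ) (hper : ∀ k, a (k + P) = a k)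
    (φ : ℝ) (hφdef : φ = ∏ j ∈ Finset.Icc 1 P, a j) (hφ : 1 < |φ|)
    (u : ℕ → Ω → ℝ) (humeas : ∀ k, Measurable (u k)) (huL2 : ∀ k, MemLp (u k) 2 μ)
    -- the innovation is periodically distributed with period P
    (hpd : ∀ m : ℕ,
      Measure.map (fun ω => fun i : Fin m => u ((i : ℕ) + P) ω) μ
        = Measure.map (fun ω => fun i : Fin m => u (i : ℕ) ω) μ)
    (X : ℕ → Ω → ℝ)
    (hrec : ∀ k ω, X (k + 1) ω = a (k + 1) * X k ω + u (k + 1) ω)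
    (U : ℕ → ℕ → Ω → ℝ)
    (hU : ∀ n r ω, U n r ω
      = ∑ s ∈ Finset.Icc 1 r, (∏ j ∈ Finset.Icc (s + 1) r, a j) * u (n * P + s) ω)
    (Z : ℕ → Ω → ℝ)
    (hZ : ∀ n ω, Z n ω = ∑ l ∈ Finset.range (n + 1), (φ ^ (l + 1))⁻¹ * U l P ω) :
    ∃ ζ : Ω → ℝ, MemLp ζ 2 μ ∧
      (∀ᵐ ω ∂μ, Tendsto (fun n => Z n ω) atTop (𝓝 (ζ ω))) ∧
      Tendsto (fun n => ∫ ω, (Z n ω - ζ ω) ^ 2 ∂μ) atTop (𝓝 0) ∧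
      ∀ r : ℕ, 1 ≤ r → r ≤ P →
        (∀ᵐ ω ∂μ, Tendsto (fun n => (φ ^ n)⁻¹ * X (n * P + r) ω) atTop
          (𝓝 ((∏ j ∈ Finset.Icc 1 r, a j) * (X 0 ω + ζ ω)))) ∧
        Tendsto (fun n => ∫ ω,
            ((φ ^ n)⁻¹ * X (n * P + r) ω
              - (∏ j ∈ Finset.Icc 1 r, a j) * (X 0 ω + ζ ω)) ^ 2 ∂μ)
          atTop (𝓝 0) := by
  have hφ0 : φ ≠ 0 := abs_pos.mp (one_pos.trans hφ)
  have hUm : ∀ n r, Measurable (U n r) := fun n r => by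
    rw [show U n r = _ from funext (hU n r)]; fun_prop
  have hZm : ∀ n, Measurable (Z n) := fun n => by
    rw [show Z n = _ from funext (hZ n)]; fun_prop
  have hUbound : ∀ r, ∃ M ≠ ∞, ∀ n, eLpNorm (U n r) 2 μ ≤ M := fun r =>
    ⟨_, ENNReal.sum_ne_top.2 fun s _ => ENNReal.mul_ne_top enorm_ne_top (huL2 s).eLpNorm_ne_top,
      fun n => by
        rw [show U n r = _ from funext (hU n r)]
        exact eLpNorm_sum_mul_le_of_periodic_map one_le_two humeas
          (periodic_map_of_map_fin_eq humeas hpd) _ _ n⟩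
  obtain ⟨ζ, hζ, hZae, hZL2⟩ : ∃ ζ : Ω → ℝ, MemLp ζ 2 μ ∧
      (∀ᵐ ω ∂μ, Tendsto (fun n => Z n ω) atTop (𝓝 (ζ ω))) ∧
      Tendsto (fun n => eLpNorm (fun ω => Z n ω - ζ ω) 2 μ) atTop (𝓝 0) := by
    obtain ⟨M, hM, hUM⟩ := hUbound P
    obtain ⟨hζ, hae, hL2⟩ := memLp_tsum_and_tendsto_sum_range one_le_two
      (fun l => ((hUm l P).const_mul _).aestronglyMeasurable)
      (tsum_eLpNorm_inv_pow_mul_ne_top hφ hM hUM)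
    refine ⟨_, hζ, hae.mono fun ω h => ?_, ?_⟩
    · simpa only [hZ] using (tendsto_add_atTop_iff_nat 1).2 h
    · simpa only [hZ] using (tendsto_add_atTop_iff_nat 1).2 hL2
  refine ⟨ζ, hζ, hZae, tendsto_integral_sq_of_tendsto_eLpNorm
    (fun n => (hZm n).aestronglyMeasurable.sub hζ.1) hZL2, fun r _ _ => ?_⟩
  obtain ⟨M, hM, hUM⟩ := hUbound r
  have hkey : ∀ n ω, (φ ^ (n + 1))⁻¹ * X ((n + 1) * P + r) ω
      = (∏ j ∈ Icc 1 r, a j) * (X 0 ω + Z n ω) + (φ ^ (n + 1))⁻¹ * U (n + 1) r ω :=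
    fun n ω => by
      simp only [hZ, hU]
      exact inv_pow_mul_eq_prod_mul_add_blockInnovation (x := (X · ω)) (v := (u · ω)) hper
        (hrec · ω) hφdef.symm hφ0 n r
  obtain ⟨hae, hL2⟩ := ae_tendsto_and_tendsto_integral_sq_of_eq_mul_add _ hkey
    (fun n => (hZm n).aestronglyMeasurable) hζ.1
    (fun n => ((hUm (n + 1) r).const_mul _).aestronglyMeasurable) hZae hZL2
    (tsum_eLpNorm_inv_pow_mul_ne_top hφ hM fun n => hUM (n + 1))
  exact ⟨hae.mono fun ω h => (tendsto_add_atTop_iff_nat 1).1 h,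
    (tendsto_add_atTop_iff_nat 1).1 hL2⟩

/-- Proposition 1: in the explosive PAR(1) model with |φ| > 1,
φ^{-n} X_{nP+r} → A_1^r (X_0 + ζ) a.s. and in quadratic mean, where
ζ is the a.s./L² limit of Z_n = ∑_{l=0}^n φ^{-l-1} U_l^{(P)}. -/
theorem stmt6 {Ω : Type*} [MeasurableSpace Ω] (μ : Measure Ω) [IsProbabilityMeasure μ]
    (P : ℕ) (hP : 1 ≤ P) (a : ℕ → ℝ) (hper : ∀ k, a (k + P) = a k)
    (φ : ℝ) (hφdef : φ = ∏ j ∈ Finset.Icc 1 P, a j) (hφ : 1 < |φ|)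
    (u : ℕ → Ω → ℝ) (humeas : ∀ k, Measurable (u k)) (huL2 : ∀ k, MemLp (u k) 2 μ)
    (hucent : ∀ k, ∫ ω, u k ω ∂μ = 0)
    -- the innovation is periodically distributed with period P
    (hpd : ∀ m : ℕ,
      Measure.map (fun ω => fun i : Fin m => u ((i : ℕ) + P) ω) μ
        = Measure.map (fun ω => fun i : Fin m => u (i : ℕ) ω) μ)
    (X : ℕ → Ω → ℝ) (hX0 : MemLp (X 0) 2 μ)
    (hrec : ∀ k ω, X (k + 1) ω = a (k + 1) * X k ω + u (k + 1) ω)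
    (U : ℕ → ℕ → Ω → ℝ)
    (hU : ∀ n r ω, U n r ω
      = ∑ s ∈ Finset.Icc 1 r, (∏ j ∈ Finset.Icc (s + 1) r, a j) * u (n * P + s) ω)
    (Z : ℕ → Ω → ℝ)
    (hZ : ∀ n ω, Z n ω = ∑ l ∈ Finset.range (n + 1), (φ ^ (l + 1))⁻¹ * U l P ω) :
    ∃ ζ : Ω → ℝ, MemLp ζ 2 μ ∧
      (∀ᵐ ω ∂μ, Tendsto (fun n => Z n ω) atTop (𝓝 (ζ ω))) ∧
      Tendsto (fun n => ∫ ω, (Z n ω - ζ ω) ^ 2 ∂μ) atTop (𝓝 0) ∧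
      ∀ r : ℕ, 1 ≤ r → r ≤ P →
        (∀ᵐ ω ∂μ, Tendsto (fun n => (φ ^ n)⁻¹ * X (n * P + r) ω) atTop
          (𝓝 ((∏ j ∈ Finset.Icc 1 r, a j) * (X 0 ω + ζ ω)))) ∧
        Tendsto (fun n => ∫ ω,
            ((φ ^ n)⁻¹ * X (n * P + r) ω
              - (∏ j ∈ Finset.Icc 1 r, a j) * (X 0 ω + ζ ω)) ^ 2 ∂μ)
          atTop (𝓝 0) :=
  stmt6_general μ P a hper φ hφdef hφ u humeas huL2 hpd X hrec U hU Z hZ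
end

section
/- In the explosive PAR(1) model with |φ| > 1, for each r = 1,…,P, φ^{-2n} B_n^{(r)} converges almost surely and in L¹ to (A_1^{r-1})² (X_0 + ζ)² / (φ² - 1), where B_n^{(r)} = ∑_{j=0}^{n-1} (X_{jP+r-1})². -/
/-!
Iterating the recursion over whole periods gives
`φ⁻ⁿ X_{nP+m} = A (X₀ + Z_{n-1}) + φ⁻ⁿ Rₙ` with `A = a₁ ⋯ a_m` and the in-block noise
`Rₙ = ∑_{s ≤ m} a_{s+1} ⋯ a_m u_{nP+s}`, which has the same law for every `n` because the law of
`u` is `P`-periodic. Hence `φ⁻ⁿ Rₙ → 0` almost surely (its L² norms are summable) and in L², so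
`φ⁻ⁿ X_{nP+m} → A (X₀ + ζ)` almost surely and in L², and its square converges almost surely and in
L¹. A Toeplitz lemma for the weights `φ^{2j}` turns this into the convergence of
`φ^{-2n} ∑_{j<n} X_{jP+m}²` to `A² (X₀ + ζ)² / (φ² - 1)`.
-/

open MeasureTheory Filter Topology ProbabilityTheory Finset Asymptotics
open scoped ENNReal

theorem eq_prod_mul_add_sum_of_forall_eq_mul_add {R : Type*} [CommSemiring R] {a x v : ℕ → R}
    (hrec : ∀ k, x (k + 1) = a (k + 1) * x k + v (k + 1)) {c t : ℕ} (hct : c ≤ t) :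
    x t = (∏ j ∈ Ioc c t, a j) * x c + ∑ s ∈ Ioc c t, (∏ j ∈ Ioc s t, a j) * v s := by
  induction t, hct using Nat.le_induction with
  | base => simp
  | succ t hct ih =>
    have hshift : ∀ s ∈ Ioc c t, (∏ j ∈ Ioc s (t + 1), a j) * v s
        = a (t + 1) * ((∏ j ∈ Ioc s t, a j) * v s) := fun s hs => by
      rw [prod_Ioc_succ_top (mem_Ioc.1 hs).2]; ring
    rw [hrec, ih, prod_Ioc_succ_top hct, sum_Ioc_succ_top hct, sum_congr rfl hshift,
      ← mul_sum, Ioc_self, prod_empty]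
    ring

theorem Function.Periodic.prod_Ioc_mul_add {M : Type*} [CommMonoid M] {a : ℕ → M} {P : ℕ}
    (ha : Function.Periodic a P) (n s t : ℕ) :
    ∏ j ∈ Ioc (n * P + s) (n * P + t), a j = ∏ j ∈ Ioc s t, a j := by
  rw [← map_add_left_Ioc, prod_map]
  exact prod_congr rfl fun j _ => by simpa [add_comm] using ha.nat_mul n j

def blockNoise {R : Type*} [CommSemiring R] (a v : ℕ → R) (P n m : ℕ) : R :=
  ∑ s ∈ Ioc 0 m, (∏ j ∈ Ioc s m, a j) * v (n * P + s)

theorem eq_prod_mul_add_blockNoise {R : Type*} [CommSemiring R] {a x v : ℕ → R} {P : ℕ}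
    (ha : Function.Periodic a P) (hrec : ∀ k, x (k + 1) = a (k + 1) * x k + v (k + 1)) (n m : ℕ) :
    x (n * P + m) = (∏ j ∈ Ioc 0 m, a j) * x (n * P) + blockNoise a v P n m := by
  have hprod : ∏ j ∈ Ioc (n * P) (n * P + m), a j = ∏ j ∈ Ioc 0 m, a j := by
    simpa using ha.prod_Ioc_mul_add n 0 m
  have hblock : Ioc (n * P) (n * P + m) = (Ioc 0 m).map (addLeftEmbedding (n * P)) := by simp
  rw [eq_prod_mul_add_sum_of_forall_eq_mul_add hrec (Nat.le_add_right _ m), hprod, blockNoise,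
    hblock, sum_map]
  simp only [addLeftEmbedding_apply, ha.prod_Ioc_mul_add]

theorem eq_pow_mul_add_sum_blockNoise {K : Type*} [Field K] {a x v : ℕ → K} {P : ℕ}
    (ha : Function.Periodic a P) (hrec : ∀ k, x (k + 1) = a (k + 1) * x k + v (k + 1))
    (hφ : ∏ j ∈ Ioc 0 P, a j ≠ 0) (n : ℕ) :
    x (n * P) = (∏ j ∈ Ioc 0 P, a j) ^ n *
      (x 0 + ∑ l ∈ range n, ((∏ j ∈ Ioc 0 P, a j) ^ (l + 1))⁻¹ * blockNoise a v P l P) := by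
  induction n with
  | zero => simp
  | succ n ih =>
    rw [Nat.succ_mul, eq_prod_mul_add_blockNoise ha hrec, ih, sum_range_succ]
    field_simp
    ring

section Toeplitz

variable {q : ℝ}

theorem tendsto_inv_pow_mul_sum_range_pow_mul (hq : 1 < q) {e : ℕ → ℝ}
    (he : Tendsto e atTop (𝓝 0)) :
    Tendsto (fun n => (q ^ n)⁻¹ * ∑ j ∈ range n, q ^ j * e j) atTop (𝓝 0) := by
  have hq0 : 0 < q := zero_lt_one.trans hq
  have hgeom : ∀ n, ∑ j ∈ range n, q ^ j = (q ^ n - 1) / (q - 1) := fun n => geom_sum_eq hq.ne' n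
  have hsmall : (fun j => q ^ j * e j) =o[atTop] (fun j => q ^ j) := by
    simpa using (isBigO_refl (fun j => q ^ j) atTop).mul_isLittleO ((isLittleO_one_iff ℝ).2 he)
  have hsum_top : Tendsto (fun n => ∑ j ∈ range n, q ^ j) atTop atTop := by
    simp_rw [hgeom]
    exact (tendsto_atTop_add_const_right _ _ (tendsto_pow_atTop_atTop_of_one_lt hq)).atTop_div_const
      (sub_pos.2 hq)
  have hsum_le : (fun n => ∑ j ∈ range n, q ^ j) =O[atTop] (fun n => q ^ n) := by
    refine IsBigO.of_bound (q - 1)⁻¹ (Eventually.of_forall fun n => ?_)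
    rw [Real.norm_of_nonneg (sum_nonneg fun j _ => by positivity),
      Real.norm_of_nonneg (by positivity), hgeom, div_eq_inv_mul]
    exact mul_le_mul_of_nonneg_left (by linarith) (inv_nonneg.2 (sub_pos.2 hq).le)
  have := ((hsmall.sum_range (fun j => by positivity) hsum_top).trans_isBigO hsum_le)
  simpa [div_eq_inv_mul] using this.tendsto_div_nhds_zero

theorem inv_pow_mul_sum_range_sub_div (hq : 1 < q) (b : ℕ → ℝ) (L : ℝ) (n : ℕ) :
    (q ^ n)⁻¹ * ∑ j ∈ range n, b j - L / (q - 1)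
      = (q ^ n)⁻¹ * ∑ j ∈ range n, q ^ j * ((q ^ j)⁻¹ * b j - L) - (q ^ n)⁻¹ * (L / (q - 1)) := by
  have hq0 : 0 < q := zero_lt_one.trans hq
  have hq1 : q - 1 ≠ 0 := (sub_pos.2 hq).ne'
  have hterm : ∀ j, q ^ j * ((q ^ j)⁻¹ * b j - L) = b j - q ^ j * L := fun j => by
    field_simp
  simp only [hterm, sum_sub_distrib, ← sum_mul, geom_sum_eq hq.ne']
  field_simp
  ring

theorem abs_inv_pow_mul_sum_range_sub_div_le (hq : 1 < q) (b : ℕ → ℝ) (L : ℝ) (n : ℕ) :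
    |(q ^ n)⁻¹ * ∑ j ∈ range n, b j - L / (q - 1)|
      ≤ (q ^ n)⁻¹ * ∑ j ∈ range n, q ^ j * |(q ^ j)⁻¹ * b j - L| + (q ^ n)⁻¹ * (|L| / (q - 1)) := by
  have hq0 : 0 < q := zero_lt_one.trans hq
  rw [inv_pow_mul_sum_range_sub_div hq]
  refine (abs_sub _ _).trans (add_le_add ?_ (le_of_eq ?_))
  · rw [abs_mul, abs_of_pos (by positivity)]
    gcongr
    refine (abs_sum_le_sum_abs _ _).trans (le_of_eq (sum_congr rfl fun j _ => ?_))
    rw [abs_mul, abs_of_pos (by positivity)]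
  · rw [abs_mul, abs_div, abs_of_pos (by positivity), abs_of_pos (sub_pos.2 hq)]

theorem tendsto_inv_pow_mul_sum_range (hq : 1 < q) {b : ℕ → ℝ} {L : ℝ}
    (hb : Tendsto (fun j => (q ^ j)⁻¹ * b j) atTop (𝓝 L)) :
    Tendsto (fun n => (q ^ n)⁻¹ * ∑ j ∈ range n, b j) atTop (𝓝 (L / (q - 1))) := by
  rw [tendsto_iff_norm_sub_tendsto_zero]
  refine squeeze_zero (fun _ => norm_nonneg _)
    (fun n => abs_inv_pow_mul_sum_range_sub_div_le hq b L n) ?_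
  have hgeom : Tendsto (fun n => (q ^ n)⁻¹) atTop (𝓝 0) :=
    tendsto_inv_atTop_zero.comp (tendsto_pow_atTop_atTop_of_one_lt hq)
  simpa using (tendsto_inv_pow_mul_sum_range_pow_mul hq
    (by simpa using (hb.sub_const L).abs)).add (hgeom.mul_const (|L| / (q - 1)))

theorem tendsto_integral_abs_inv_pow_mul_sum_range_sub_div {Ω : Type*} [MeasurableSpace Ω]
    {μ : Measure Ω} (hq : 1 < q) {b : ℕ → Ω → ℝ} {L : Ω → ℝ}
    (hb : ∀ j, Integrable (fun ω => (q ^ j)⁻¹ * b j ω - L ω) μ) (hL : Integrable L μ)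
    (h : Tendsto (fun j => ∫ ω, |(q ^ j)⁻¹ * b j ω - L ω| ∂μ) atTop (𝓝 0)) :
    Tendsto (fun n => ∫ ω, |(q ^ n)⁻¹ * ∑ j ∈ range n, b j ω - L ω / (q - 1)| ∂μ)
      atTop (𝓝 0) := by
  have hgeom : Tendsto (fun n => (q ^ n)⁻¹) atTop (𝓝 0) :=
    tendsto_inv_atTop_zero.comp (tendsto_pow_atTop_atTop_of_one_lt hq)
  have hterm : ∀ j, Integrable (fun ω => q ^ j * |(q ^ j)⁻¹ * b j ω - L ω|) μ :=
    fun j => (hb j).abs.const_mul _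
  have hsum : ∀ n, Integrable (fun ω => ∑ j ∈ range n, q ^ j * |(q ^ j)⁻¹ * b j ω - L ω|) μ :=
    fun n => integrable_finsetSum _ fun j _ => hterm j
  have hLq : Integrable (fun ω => |L ω| / (q - 1)) μ := hL.abs.div_const _
  have hbound : ∀ n, Integrable (fun ω =>
      (q ^ n)⁻¹ * ∑ j ∈ range n, q ^ j * |(q ^ j)⁻¹ * b j ω - L ω|
        + (q ^ n)⁻¹ * (|L ω| / (q - 1))) μ :=
    fun n => ((hsum n).const_mul _).add (hLq.const_mul _)
  refine squeeze_zero (fun n => integral_nonneg fun ω => abs_nonneg _) (fun n =>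
    integral_mono_of_nonneg (Eventually.of_forall fun ω => abs_nonneg _) (hbound n)
      (Eventually.of_forall fun ω => abs_inv_pow_mul_sum_range_sub_div_le hq (b · ω) (L ω) n)) ?_
  simp only [integral_add ((hsum _).const_mul _) (hLq.const_mul _), integral_const_mul,
    integral_finsetSum _ fun j _ => hterm j, integral_div]
  simpa using (tendsto_inv_pow_mul_sum_range_pow_mul hq h).add
    (hgeom.mul_const ((∫ ω, |L ω| ∂μ) / (q - 1)))

end Toeplitz

theorem abs_sq_sub_sq_le {δ : ℝ} (hδ : 0 < δ) (y g : ℝ) :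
    |y ^ 2 - g ^ 2| ≤ (1 + δ⁻¹) * (y - g) ^ 2 + δ * g ^ 2 := by
  have hamgm : 2 * (|y - g| * |g|) ≤ δ⁻¹ * (y - g) ^ 2 + δ * g ^ 2 := by
    have hsq : δ⁻¹ * (|y - g| - δ * |g|) ^ 2
        = δ⁻¹ * |y - g| ^ 2 - 2 * (|y - g| * |g|) + δ * |g| ^ 2 := by
      field_simp
      ring
    rw [sq_abs, sq_abs] at hsq
    nlinarith [mul_nonneg (inv_nonneg.2 hδ.le) (sq_nonneg (|y - g| - δ * |g|))]
  calc |y ^ 2 - g ^ 2| = |y - g| * |(y - g) + 2 * g| := by rw [← abs_mul]; ring_nf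
    _ ≤ |y - g| * (|y - g| + 2 * |g|) := by
        gcongr
        exact (abs_add_le _ _).trans_eq (by rw [abs_mul, abs_two])
    _ = (y - g) ^ 2 + 2 * (|y - g| * |g|) := by rw [mul_add, ← sq, sq_abs]; ring
    _ ≤ (1 + δ⁻¹) * (y - g) ^ 2 + δ * g ^ 2 := by linarith

section Lp

variable {Ω : Type*} [MeasurableSpace Ω] {μ : Measure Ω}

theorem tendsto_integral_abs_sq_sub_sq {Y : ℕ → Ω → ℝ} {G : Ω → ℝ} (hY : ∀ n, MemLp (Y n) 2 μ)
    (hG : MemLp G 2 μ) (h : Tendsto (fun n => ∫ ω, (Y n ω - G ω) ^ 2 ∂μ) atTop (𝓝 0)) :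
    Tendsto (fun n => ∫ ω, |Y n ω ^ 2 - G ω ^ 2| ∂μ) atTop (𝓝 0) := by
  have hG2 : Integrable (fun ω => G ω ^ 2) μ := hG.integrable_sq
  have hbound : ∀ δ > 0, ∀ n, ∫ ω, |Y n ω ^ 2 - G ω ^ 2| ∂μ
      ≤ (1 + δ⁻¹) * ∫ ω, (Y n ω - G ω) ^ 2 ∂μ + δ * ∫ ω, G ω ^ 2 ∂μ := fun δ hδ n => by
    have hdiff : Integrable (fun ω => (Y n ω - G ω) ^ 2) μ := ((hY n).sub hG).integrable_sq
    calc ∫ ω, |Y n ω ^ 2 - G ω ^ 2| ∂μ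
        ≤ ∫ ω, ((1 + δ⁻¹) * (Y n ω - G ω) ^ 2 + δ * G ω ^ 2) ∂μ :=
          integral_mono_of_nonneg (Eventually.of_forall fun ω => abs_nonneg _)
            ((hdiff.const_mul _).add (hG2.const_mul _))
            (Eventually.of_forall fun ω => abs_sq_sub_sq_le hδ _ _)
      _ = _ := by
          rw [integral_add (hdiff.const_mul _) (hG2.const_mul _), integral_const_mul,
            integral_const_mul]
  refine tendsto_order.2 ⟨fun c hc => Eventually.of_forall fun n =>
    hc.trans_le (integral_nonneg fun ω => abs_nonneg _), fun ε hε => ?_⟩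
  obtain ⟨δ, hδ, hδε⟩ := exists_pos_mul_lt hε (∫ ω, G ω ^ 2 ∂μ)
  have hlim : Tendsto (fun n => (1 + δ⁻¹) * ∫ ω, (Y n ω - G ω) ^ 2 ∂μ + δ * ∫ ω, G ω ^ 2 ∂μ)
      atTop (𝓝 (δ * ∫ ω, G ω ^ 2 ∂μ)) := by
    simpa using (h.const_mul (1 + δ⁻¹)).add_const (δ * ∫ ω, G ω ^ 2 ∂μ)
  filter_upwards [hlim.eventually (gt_mem_nhds (by rwa [mul_comm]))] with n hn
  exact (hbound δ hδ n).trans_lt hn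

theorem tendsto_integral_add_sq {f g : ℕ → Ω → ℝ} (hf : ∀ n, MemLp (f n) 2 μ)
    (hg : ∀ n, MemLp (g n) 2 μ) (hf0 : Tendsto (fun n => ∫ ω, f n ω ^ 2 ∂μ) atTop (𝓝 0))
    (hg0 : Tendsto (fun n => ∫ ω, g n ω ^ 2 ∂μ) atTop (𝓝 0)) :
    Tendsto (fun n => ∫ ω, (f n ω + g n ω) ^ 2 ∂μ) atTop (𝓝 0) := by
  refine squeeze_zero (fun n => integral_nonneg fun ω => sq_nonneg _) (fun n => ?_)
    (by simpa using ((hf0.add hg0).const_mul 2))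
  have hf2 : Integrable (fun ω => f n ω ^ 2) μ := (hf n).integrable_sq
  have hg2 : Integrable (fun ω => g n ω ^ 2) μ := (hg n).integrable_sq
  calc ∫ ω, (f n ω + g n ω) ^ 2 ∂μ ≤ ∫ ω, 2 * (f n ω ^ 2 + g n ω ^ 2) ∂μ :=
        integral_mono_of_nonneg (Eventually.of_forall fun ω => sq_nonneg _)
          ((hf2.add hg2).const_mul 2) (Eventually.of_forall fun ω => add_sq_le)
    _ = 2 * (∫ ω, f n ω ^ 2 ∂μ + ∫ ω, g n ω ^ 2 ∂μ) := by
        rw [integral_const_mul, integral_add hf2 hg2]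

theorem ae_tendsto_pow_mul_zero_of_eLpNorm_le {p : ℝ≥0∞} (hp : 1 ≤ p) {f : ℕ → Ω → ℝ}
    (hf : ∀ n, AEStronglyMeasurable (f n) μ) {C : ℝ≥0∞} (hC : C ≠ ∞)
    (hfC : ∀ n, eLpNorm (f n) p μ ≤ C) {r : ℝ} (hr : |r| < 1) :
    ∀ᵐ ω ∂μ, Tendsto (fun n => r ^ n * f n ω) atTop (𝓝 0) := by
  have hr' : ‖r‖ₑ < 1 := by simpa [← ofReal_norm, Real.norm_eq_abs] using hr
  have hsum : ∑' n, eLpNorm (fun ω => r ^ n * f n ω) p μ ≠ ∞ := by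
    refine ne_top_of_le_ne_top
      (ENNReal.mul_ne_top (ENNReal.inv_ne_top.2 (tsub_pos_of_lt hr').ne') hC) ?_
    calc ∑' n, eLpNorm (fun ω => r ^ n * f n ω) p μ ≤ ∑' n, ‖r‖ₑ ^ n * C :=
          ENNReal.tsum_le_tsum fun n => (eLpNorm_const_smul (r ^ n) (f n) p μ).trans_le
            (by rw [enorm_pow]; gcongr; exact hfC n)
      _ = (1 - ‖r‖ₑ)⁻¹ * C := by rw [ENNReal.tsum_mul_right, ENNReal.tsum_geometric]
  filter_upwards [summable_norm_of_tsum_eLpNorm_ne_top hp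
    (fun n => (hf n).const_mul (r ^ n)) hsum] with ω hω
  exact tendsto_zero_iff_norm_tendsto_zero.2 hω.tendsto_atTop_zero

theorem map_shift_mul_eq {u : ℕ → Ω → ℝ} {P : ℕ} (hu : ∀ k, AEMeasurable (u k) μ)
    (hpd : ∀ m : ℕ, Measure.map (fun ω => fun i : Fin m => u ((i : ℕ) + P) ω) μ
      = Measure.map (fun ω => fun i : Fin m => u (i : ℕ) ω) μ) (n M : ℕ) :
    Measure.map (fun ω (i : Fin M) => u (n * P + i) ω) μ
      = Measure.map (fun ω (i : Fin M) => u i ω) μ := by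
  induction n with
  | zero => simp
  | succ n ih =>
    let π : (Fin (M + n * P) → ℝ) → Fin M → ℝ := fun x i => x ⟨n * P + i, by omega⟩
    have hπ : Measurable π := measurable_pi_lambda _ fun i => measurable_pi_apply _
    have hshifted : AEMeasurable (fun ω (j : Fin (M + n * P)) => u (j + P) ω) μ :=
      aemeasurable_pi_lambda _ fun j => hu _
    have hunshifted : AEMeasurable (fun ω (j : Fin (M + n * P)) => u j ω) μ :=
      aemeasurable_pi_lambda _ fun j => hu _
    have hsucc : (fun ω (i : Fin M) => u ((n + 1) * P + i) ω)
        = π ∘ fun ω (j : Fin (M + n * P)) => u (j + P) ω := by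
      funext ω i
      simp only [π, Function.comp_apply, add_mul, one_mul]
      congr 1
      ring
    rw [hsucc, ← AEMeasurable.map_map_of_aemeasurable hπ.aemeasurable hshifted, hpd,
      AEMeasurable.map_map_of_aemeasurable hπ.aemeasurable hunshifted]
    exact ih

theorem identDistrib_sum_mul_shift {u : ℕ → Ω → ℝ} {P : ℕ} (hu : ∀ k, AEMeasurable (u k) μ)
    (hpd : ∀ m : ℕ, Measure.map (fun ω => fun i : Fin m => u ((i : ℕ) + P) ω) μ
      = Measure.map (fun ω => fun i : Fin m => u (i : ℕ) ω) μ) (S : Finset ℕ) (g : ℕ → ℝ)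
    (n : ℕ) :
    IdentDistrib (fun ω => ∑ s ∈ S, g s * u (n * P + s) ω) (fun ω => ∑ s ∈ S, g s * u s ω) μ μ := by
  obtain ⟨M, hSM⟩ := S.exists_nat_subset_range
  let F : (Fin M → ℝ) → ℝ := fun x => ∑ s ∈ S, g s * if h : s < M then x ⟨s, h⟩ else 0
  have hF : Measurable F := Finset.measurable_sum _ fun s _ => by
    by_cases h : s < M
    · simpa [h] using (measurable_pi_apply (X := fun _ : Fin M => ℝ) ⟨s, h⟩).const_mul (g s)
    · simp [h]
  have hvec : ∀ f : ℕ → ℕ, AEMeasurable (fun ω (i : Fin M) => u (f i) ω) μ :=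
    fun f => aemeasurable_pi_lambda _ fun i => hu _
  have hcomp : ∀ f : ℕ → ℕ, (fun ω => ∑ s ∈ S, g s * u (f s) ω)
      = F ∘ fun ω (i : Fin M) => u (f i) ω := fun f => by
    funext ω
    exact sum_congr rfl fun s hs => by simp [dif_pos (mem_range.1 (hSM hs))]
  convert (IdentDistrib.mk (hvec (n * P + ·)) (hvec id) (map_shift_mul_eq hu hpd n M)).comp hF
    using 1
  · exact hcomp (n * P + ·)
  · exact hcomp id

end Lp

theorem memLp_blockNoise {Ω : Type*} [MeasurableSpace Ω] {μ : Measure Ω} {p : ℝ≥0∞}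
    {u : ℕ → Ω → ℝ} (hu : ∀ k, MemLp (u k) p μ) (a : ℕ → ℝ) (P n m : ℕ) :
    MemLp (fun ω => blockNoise a (u · ω) P n m) p μ :=
  memLp_finsetSum _ fun _ _ => (hu _).const_mul _

theorem tendsto_inv_pow_mul_of_periodic_rec {Ω : Type*} [MeasurableSpace Ω] {μ : Measure Ω}
    {P : ℕ} {a : ℕ → ℝ} (hper : Function.Periodic a P) {φ : ℝ}
    (hφdef : φ = ∏ j ∈ Ioc 0 P, a j) (hφ : 1 < |φ|) {u : ℕ → Ω → ℝ}
    (hu : ∀ k, MemLp (u k) 2 μ)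
    (hpd : ∀ m : ℕ, Measure.map (fun ω => fun i : Fin m => u ((i : ℕ) + P) ω) μ
      = Measure.map (fun ω => fun i : Fin m => u (i : ℕ) ω) μ)
    {X : ℕ → Ω → ℝ} (hrec : ∀ k ω, X (k + 1) ω = a (k + 1) * X k ω + u (k + 1) ω)
    {Z : ℕ → Ω → ℝ}
    (hZ : ∀ n ω, Z n ω = ∑ l ∈ range (n + 1), (φ ^ (l + 1))⁻¹ * blockNoise a (u · ω) P l P)
    {ζ : Ω → ℝ} (hζmem : MemLp ζ 2 μ)
    (hζas : ∀ᵐ ω ∂μ, Tendsto (fun n => Z n ω) atTop (𝓝 (ζ ω)))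
    (hζL2 : Tendsto (fun n => ∫ ω, (Z n ω - ζ ω) ^ 2 ∂μ) atTop (𝓝 0)) (m : ℕ) :
    (∀ᵐ ω ∂μ, Tendsto (fun n => (φ ^ n)⁻¹ * X (n * P + m) ω) atTop
      (𝓝 ((∏ j ∈ Ioc 0 m, a j) * (X 0 ω + ζ ω)))) ∧
    Tendsto (fun n => ∫ ω, ((φ ^ n)⁻¹ * X (n * P + m) ω
      - (∏ j ∈ Ioc 0 m, a j) * (X 0 ω + ζ ω)) ^ 2 ∂μ) atTop (𝓝 0) := by
  set A := ∏ j ∈ Ioc 0 m, a j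
  set R : ℕ → Ω → ℝ := fun n ω => blockNoise a (u · ω) P n m
  have hφ0 : φ ≠ 0 := by rintro rfl; norm_num at hφ
  have hdecomp : ∀ n ω, (φ ^ (n + 1))⁻¹ * X ((n + 1) * P + m) ω - A * (X 0 ω + ζ ω)
      = A * (Z n ω - ζ ω) + φ⁻¹ ^ (n + 1) * R (n + 1) ω := fun n ω => by
    rw [eq_prod_mul_add_blockNoise (x := (X · ω)) (v := (u · ω)) hper (hrec · ω),
      eq_pow_mul_add_sum_blockNoise (x := (X · ω)) (v := (u · ω)) hper (hrec · ω) (hφdef ▸ hφ0),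
      ← hφdef, hZ, inv_pow]
    field_simp
    ring
  have hR : ∀ n, IdentDistrib (R n) (R 0) μ μ := fun n => by
    simpa [R, blockNoise] using identDistrib_sum_mul_shift (fun k => (hu k).aemeasurable) hpd
      (Ioc 0 m) (fun s => ∏ j ∈ Ioc s m, a j) n
  have hRmem : ∀ n, MemLp (R n) 2 μ := fun n => memLp_blockNoise hu a P n m
  have hr : |φ⁻¹| < 1 := by rw [abs_inv]; exact inv_lt_one_of_one_lt₀ hφ
  have hRae := ae_tendsto_pow_mul_zero_of_eLpNorm_le one_le_two
    (fun n => (hRmem n).aestronglyMeasurable) (hRmem 0).eLpNorm_ne_top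
    (fun n => ((hR n).eLpNorm_eq 2).le) hr
  have hRL2 : Tendsto (fun n => ∫ ω, (φ⁻¹ ^ n * R n ω) ^ 2 ∂μ) atTop (𝓝 0) := by
    have hsq : ∀ n, ∫ ω, (φ⁻¹ ^ n * R n ω) ^ 2 ∂μ = (φ⁻¹ ^ 2) ^ n * ∫ ω, R 0 ω ^ 2 ∂μ := fun n => by
      simp_rw [mul_pow, integral_const_mul, ← pow_mul, mul_comm n 2, pow_mul]
      congr 1
      exact ((hR n).comp (measurable_id.pow_const 2)).integral_eq
    simp_rw [hsq]
    have hr2 : |φ⁻¹ ^ 2| < 1 := by rw [abs_pow]; exact pow_lt_one₀ (abs_nonneg _) hr two_ne_zero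
    simpa only [zero_mul] using
      (tendsto_pow_atTop_nhds_zero_of_abs_lt_one hr2).mul_const (∫ ω, R 0 ω ^ 2 ∂μ)
  constructor
  · filter_upwards [hζas, hRae] with ω hZω hRω
    rw [← tendsto_add_atTop_iff_nat 1, ← tendsto_sub_nhds_zero_iff]
    simp_rw [hdecomp]
    simpa using ((hZω.sub_const (ζ ω)).const_mul A).add ((tendsto_add_atTop_iff_nat 1).2 hRω)
  · rw [← tendsto_add_atTop_iff_nat 1]
    simp_rw [hdecomp]
    have hZmem : ∀ n, MemLp (Z n) 2 μ := fun n => by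
      simpa only [← funext (hZ n)] using memLp_finsetSum (range (n + 1))
        fun l _ => (memLp_blockNoise hu a P l P).const_mul (φ ^ (l + 1))⁻¹
    refine tendsto_integral_add_sq (fun n => ((hZmem n).sub hζmem).const_mul A)
      (fun n => (hRmem _).const_mul _) ?_ ((tendsto_add_atTop_iff_nat 1).2 hRL2)
    simpa [mul_pow, integral_const_mul] using hζL2.const_mul (A ^ 2)

theorem stmt10_general {Ω : Type*} [MeasurableSpace Ω] (μ : Measure Ω)
    (P : ℕ) (a : ℕ → ℝ) (hper : ∀ k, a (k + P) = a k)
    (φ : ℝ) (hφdef : φ = ∏ j ∈ Finset.Icc 1 P, a j) (hφ : 1 < |φ|)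
    (u : ℕ → Ω → ℝ) (huL2 : ∀ k, MemLp (u k) 2 μ)
    (hpd : ∀ m : ℕ,
      Measure.map (fun ω => fun i : Fin m => u ((i : ℕ) + P) ω) μ
        = Measure.map (fun ω => fun i : Fin m => u (i : ℕ) ω) μ)
    (X : ℕ → Ω → ℝ) (hX0 : MemLp (X 0) 2 μ)
    (hrec : ∀ k ω, X (k + 1) ω = a (k + 1) * X k ω + u (k + 1) ω)
    (U : ℕ → ℕ → Ω → ℝ)
    (hU : ∀ n r ω, U n r ω
      = ∑ s ∈ Finset.Icc 1 r, (∏ j ∈ Finset.Icc (s + 1) r, a j) * u (n * P + s) ω)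
    (Z : ℕ → Ω → ℝ)
    (hZ : ∀ n ω, Z n ω = ∑ l ∈ Finset.range (n + 1), (φ ^ (l + 1))⁻¹ * U l P ω)
    (ζ : Ω → ℝ) (hζmem : MemLp ζ 2 μ)
    (hζas : ∀ᵐ ω ∂μ, Tendsto (fun n => Z n ω) atTop (𝓝 (ζ ω)))
    (hζL2 : Tendsto (fun n => ∫ ω, (Z n ω - ζ ω) ^ 2 ∂μ) atTop (𝓝 0)) :
    ∀ r : ℕ, 1 ≤ r → r ≤ P →
      (∀ᵐ ω ∂μ, Tendsto
          (fun n => ((φ ^ 2) ^ n)⁻¹ * ∑ j ∈ Finset.range n, (X (j * P + r - 1) ω) ^ 2)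
          atTop
          (𝓝 ((∏ j ∈ Finset.Icc 1 (r - 1), a j) ^ 2 * (X 0 ω + ζ ω) ^ 2 / (φ ^ 2 - 1)))) ∧
      Tendsto (fun n => ∫ ω,
          |((φ ^ 2) ^ n)⁻¹ * ∑ j ∈ Finset.range n, (X (j * P + r - 1) ω) ^ 2
            - (∏ j ∈ Finset.Icc 1 (r - 1), a j) ^ 2 * (X 0 ω + ζ ω) ^ 2 / (φ ^ 2 - 1)| ∂μ)
        atTop (𝓝 0) := by
  intro r hr _
  obtain ⟨m, rfl⟩ : ∃ m, r = m + 1 := ⟨r - 1, by omega⟩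
  have hIcc : ∀ s t, Icc (s + 1) t = Ioc s t := Icc_add_one_left_eq_Ioc
  have hIcc1 : ∀ t, Icc 1 t = Ioc 0 t := hIcc 0
  have hZ' : ∀ n ω, Z n ω
      = ∑ l ∈ range (n + 1), (φ ^ (l + 1))⁻¹ * blockNoise a (u · ω) P l P := fun n ω => by
    simp only [hZ, hU, blockNoise, hIcc1, hIcc]
  obtain ⟨hYae, hYL2⟩ := tendsto_inv_pow_mul_of_periodic_rec hper
    (by rw [hφdef, hIcc1]) hφ huL2 hpd hrec hZ' hζmem hζas hζL2 m
  simp only [← add_assoc, Nat.add_sub_cancel, hIcc1]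
  set A := ∏ j ∈ Ioc 0 m, a j
  have hq : 1 < φ ^ 2 := (one_lt_sq_iff_one_lt_abs φ).2 hφ
  have hXmem : ∀ k, MemLp (X k) 2 μ := fun k => by
    induction k with
    | zero => exact hX0
    | succ k ih =>
      rw [show X (k + 1) = _ from funext (hrec k)]
      exact (ih.const_mul _).add (huL2 _)
  have hsq : ∀ j ω, ((φ ^ 2) ^ j)⁻¹ * X (j * P + m) ω ^ 2 = ((φ ^ j)⁻¹ * X (j * P + m) ω) ^ 2 :=
    fun j ω => by ring
  have hG : ∀ ω, A ^ 2 * (X 0 ω + ζ ω) ^ 2 = (A * (X 0 ω + ζ ω)) ^ 2 := fun ω => by ring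
  refine ⟨hYae.mono fun ω h => ?_, ?_⟩
  · rw [hG]
    exact tendsto_inv_pow_mul_sum_range hq (by simpa only [hsq] using h.pow 2)
  · refine tendsto_integral_abs_inv_pow_mul_sum_range_sub_div hq
      (fun j => ((hXmem _).integrable_sq.const_mul _).sub
        ((hX0.add hζmem).integrable_sq.const_mul _))
      ((hX0.add hζmem).integrable_sq.const_mul _) ?_
    simpa only [hsq, hG] using tendsto_integral_abs_sq_sub_sq (G := fun ω => A * (X 0 ω + ζ ω))
      (fun j => (hXmem _).const_mul _) ((hX0.add hζmem).const_mul A) hYL2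

/-- Lemma 1: φ^{-2n} B_n^{(r)} → (A_1^{r-1})² (X_0+ζ)²/(φ²-1)
a.s. and in L¹, where B_n^{(r)} = ∑_{j=0}^{n-1} X_{jP+r-1}². -/
theorem stmt10 {Ω : Type*} [MeasurableSpace Ω] (μ : Measure Ω) [IsProbabilityMeasure μ]
    (P : ℕ) (hP : 1 ≤ P) (a : ℕ → ℝ) (hper : ∀ k, a (k + P) = a k)
    (φ : ℝ) (hφdef : φ = ∏ j ∈ Finset.Icc 1 P, a j) (hφ : 1 < |φ|)
    (u : ℕ → Ω → ℝ) (humeas : ∀ k, Measurable (u k)) (huL2 : ∀ k, MemLp (u k) 2 μ)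
    (hucent : ∀ k, ∫ ω, u k ω ∂μ = 0)
    (hpd : ∀ m : ℕ,
      Measure.map (fun ω => fun i : Fin m => u ((i : ℕ) + P) ω) μ
        = Measure.map (fun ω => fun i : Fin m => u (i : ℕ) ω) μ)
    (X : ℕ → Ω → ℝ) (hX0 : MemLp (X 0) 2 μ)
    (hrec : ∀ k ω, X (k + 1) ω = a (k + 1) * X k ω + u (k + 1) ω)
    (U : ℕ → ℕ → Ω → ℝ)
    (hU : ∀ n r ω, U n r ω
      = ∑ s ∈ Finset.Icc 1 r, (∏ j ∈ Finset.Icc (s + 1) r, a j) * u (n * P + s) ω)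
    (Z : ℕ → Ω → ℝ)
    (hZ : ∀ n ω, Z n ω = ∑ l ∈ Finset.range (n + 1), (φ ^ (l + 1))⁻¹ * U l P ω)
    (ζ : Ω → ℝ) (hζmem : MemLp ζ 2 μ)
    (hζas : ∀ᵐ ω ∂μ, Tendsto (fun n => Z n ω) atTop (𝓝 (ζ ω)))
    (hζL2 : Tendsto (fun n => ∫ ω, (Z n ω - ζ ω) ^ 2 ∂μ) atTop (𝓝 0)) :
    ∀ r : ℕ, 1 ≤ r → r ≤ P →
      (∀ᵐ ω ∂μ, Tendsto
          (fun n => ((φ ^ 2) ^ n)⁻¹ * ∑ j ∈ Finset.range n, (X (j * P + r - 1) ω) ^ 2)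
          atTop
          (𝓝 ((∏ j ∈ Finset.Icc 1 (r - 1), a j) ^ 2 * (X 0 ω + ζ ω) ^ 2 / (φ ^ 2 - 1)))) ∧
      Tendsto (fun n => ∫ ω,
          |((φ ^ 2) ^ n)⁻¹ * ∑ j ∈ Finset.range n, (X (j * P + r - 1) ω) ^ 2
            - (∏ j ∈ Finset.Icc 1 (r - 1), a j) ^ 2 * (X 0 ω + ζ ω) ^ 2 / (φ ^ 2 - 1)| ∂μ)
        atTop (𝓝 0) :=
  stmt10_general μ P a hper φ hφdef hφ u huL2 hpd X hX0 hrec U hU Z hZ ζ hζmem hζas hζL2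
end

section
/- If X_n → X in probability (or in distribution) and Y_n is asymptotically independent of X_n in the sense that sup over Borel sets A, B of |P[X_n ∈ A, Y_n ∈ B] − P[X_n ∈ A]P[Y_n ∈ B]| → 0, and Y_n converges in distribution to Y, then (X_n, Y_n) converges in distribution to (X', Y') where X' has the law of X, Y' the law of Y, and X', Y' are independent; consequently X_n Y_n converges in distribution to X'·Y'. -/
/-!
Let `π_n` be the joint law of `(X_n, Y_n)`. Its marginals converge, so `(π_n)` is tight, and by
Prokhorov's theorem it suffices to identify every subsequential limit `π` as `νX ⊗ νY`; since
products `f(x) g(y)` of bounded continuous functions determine a measure on `ℝ × ℝ`, this reduces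
to `∫ f(X_n) g(Y_n) dμ → ∫ f dνX · ∫ g dνY`. Writing `∫ f(X_n) g(Y_n) = Cov(f(X_n), g(Y_n)) +
∫ f(X_n) · ∫ g(Y_n)`, the second term converges to the right limit, and the covariance tends to
zero: for indicators `f = 1_A`, `g = 1_B` it is exactly the mixing discrepancy
`P[X_n ∈ A, Y_n ∈ B] - P[X_n ∈ A] P[Y_n ∈ B]`, hence also for finite linear combinations of
indicators, and these approximate bounded measurable functions uniformly.
-/

open MeasureTheory ProbabilityTheory Filter Topology BoundedContinuousFunction

lemma abs_sum_mul_indicator_le {α κ : Type*} (s : Finset κ) (c : κ → ℝ) (A : κ → Set α)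
    (x : α) : |∑ k ∈ s, c k * (A k).indicator 1 x| ≤ ∑ k ∈ s, |c k| := by
  refine (Finset.abs_sum_le_sum_abs _ _).trans (Finset.sum_le_sum fun k _ => ?_)
  rw [abs_mul]
  refine mul_le_of_le_one_right (abs_nonneg _) ?_
  by_cases hx : x ∈ A k <;> simp [hx]

section Approximation

variable {α : Type*} [MeasurableSpace α]

lemma measurable_sum_mul_indicator {κ : Type*} (s : Finset κ) (c : κ → ℝ) {A : κ → Set α}
    (hA : ∀ k, MeasurableSet (A k)) : Measurable fun x => ∑ k ∈ s, c k * (A k).indicator 1 x :=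
  Finset.measurable_sum _ fun k _ => measurable_const.mul (measurable_one.indicator (hA k))

lemma exists_sum_indicator_abs_sub_le {f : α → ℝ} (hf : Measurable f) {C : ℝ}
    (hC : ∀ x, |f x| ≤ C) {ε : ℝ} (hε : 0 < ε) :
    ∃ (s : Finset ℤ) (c : ℤ → ℝ) (A : ℤ → Set α), (∀ k, MeasurableSet (A k)) ∧
      ∀ x, |f x - ∑ k ∈ s, c k * (A k).indicator 1 x| ≤ ε := by
  set N := ⌈C / ε⌉
  refine ⟨Finset.Icc (-N) N, fun k => k * ε, fun k => {x | ⌊f x / ε⌋ = k},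
    fun k => (hf.div_const ε).floor (measurableSet_singleton k), fun x => ?_⟩
  have hmem : ⌊f x / ε⌋ ∈ Finset.Icc (-N) N := by
    have hfx := abs_le.1 (hC x)
    have hlow : ⌊-(C / ε)⌋ ≤ ⌊f x / ε⌋ := Int.floor_mono (by rw [← neg_div]; gcongr; linarith)
    rw [Int.floor_neg] at hlow
    exact Finset.mem_Icc.2
      ⟨hlow, (Int.floor_mono (by gcongr; linarith)).trans (Int.floor_le_ceil _)⟩
  have hsum : ∑ k ∈ Finset.Icc (-N) N, (k : ℝ) * ε * {y | ⌊f y / ε⌋ = k}.indicator 1 x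
      = ⌊f x / ε⌋ * ε := by
    simp only [Set.indicator_apply, Set.mem_ofPred_eq, Pi.one_apply, mul_ite, mul_one, mul_zero]
    rw [Finset.sum_ite_eq, if_pos hmem]
  have hlow : ⌊f x / ε⌋ * ε ≤ f x := (le_div_iff₀ hε).1 (Int.floor_le _)
  have hupp : f x < (⌊f x / ε⌋ + 1) * ε := (div_lt_iff₀ hε).1 (Int.lt_floor_add_one _)
  rw [hsum, abs_le]
  constructor <;> linarith

end Approximation

section Covariance

variable {Ω α β ι : Type*} [MeasurableSpace Ω] [MeasurableSpace α] [MeasurableSpace β]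

def AsymptoticallyIndependent (μ : Measure Ω) (l : Filter ι) (X : ι → Ω → α) (Y : ι → Ω → β) :
    Prop :=
  ∀ ⦃A : Set α⦄ ⦃B : Set β⦄, MeasurableSet A → MeasurableSet B →
    Tendsto (fun i => μ.real (X i ⁻¹' A ∩ Y i ⁻¹' B) - μ.real (X i ⁻¹' A) * μ.real (Y i ⁻¹' B))
      l (𝓝 0)

variable {μ : Measure Ω} [IsProbabilityMeasure μ]

lemma abs_covariance_le_of_forall_abs_le {U V : Ω → ℝ} (hU : AEStronglyMeasurable U μ)
    (hV : AEStronglyMeasurable V μ) {a b : ℝ} (hUa : ∀ ω, |U ω| ≤ a) (hVb : ∀ ω, |V ω| ≤ b) :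
    |cov[U, V; μ]| ≤ 2 * (a * b) := by
  have ha : 0 ≤ a := (abs_nonneg _).trans (hUa (nonempty_of_isProbabilityMeasure μ).some)
  have hU2 : MemLp U 2 μ := .of_bound hU a (ae_of_all _ hUa)
  have hV2 : MemLp V 2 μ := .of_bound hV b (ae_of_all _ hVb)
  have hUV : |∫ ω, (U * V) ω ∂μ| ≤ a * b := by
    simpa using norm_integral_le_of_norm_le_const (μ := μ) (f := U * V)
      (ae_of_all _ fun ω => by
        simpa [abs_mul] using mul_le_mul (hUa ω) (hVb ω) (abs_nonneg _) ha)
  have hIU : |∫ ω, U ω ∂μ| ≤ a := by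
    simpa using norm_integral_le_of_norm_le_const (μ := μ) (f := U) (ae_of_all _ hUa)
  have hIV : |∫ ω, V ω ∂μ| ≤ b := by
    simpa using norm_integral_le_of_norm_le_const (μ := μ) (f := V) (ae_of_all _ hVb)
  rw [covariance_eq_sub hU2 hV2]
  calc _ ≤ |∫ ω, (U * V) ω ∂μ| + |∫ ω, U ω ∂μ| * |∫ ω, V ω ∂μ| := by
        rw [← abs_mul]; exact abs_sub _ _
    _ ≤ a * b + a * b := by gcongr
    _ = 2 * (a * b) := by ring

lemma covariance_indicator_comp {X : Ω → α} {Y : Ω → β} (hX : Measurable X) (hY : Measurable Y)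
    {A : Set α} {B : Set β} (hA : MeasurableSet A) (hB : MeasurableSet B) :
    cov[fun ω => A.indicator 1 (X ω), fun ω => B.indicator 1 (Y ω); μ]
      = μ.real (X ⁻¹' A ∩ Y ⁻¹' B) - μ.real (X ⁻¹' A) * μ.real (Y ⁻¹' B) := by
  have hXA : (fun ω => A.indicator (1 : α → ℝ) (X ω)) = (X ⁻¹' A).indicator 1 :=
    funext fun _ => (Set.indicator_comp_right X).symm
  have hYB : (fun ω => B.indicator (1 : β → ℝ) (Y ω)) = (Y ⁻¹' B).indicator 1 :=
    funext fun _ => (Set.indicator_comp_right Y).symm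
  have hmA : MemLp ((X ⁻¹' A).indicator (1 : Ω → ℝ)) 2 μ := (memLp_const 1).indicator (hX hA)
  have hmB : MemLp ((Y ⁻¹' B).indicator (1 : Ω → ℝ)) 2 μ := (memLp_const 1).indicator (hY hB)
  rw [hXA, hYB, covariance_eq_sub hmA hmB, ← Set.inter_indicator_one,
    integral_indicator_one ((hX hA).inter (hY hB)), integral_indicator_one (hX hA),
    integral_indicator_one (hY hB)]

lemma AsymptoticallyIndependent.tendsto_covariance_sum_indicator {l : Filter ι}
    {X : ι → Ω → α} {Y : ι → Ω → β} (h : AsymptoticallyIndependent μ l X Y)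
    (hX : ∀ i, Measurable (X i)) (hY : ∀ i, Measurable (Y i)) {κ κ' : Type*}
    (s : Finset κ) (c : κ → ℝ) {A : κ → Set α} (hA : ∀ k, MeasurableSet (A k))
    (t : Finset κ') (d : κ' → ℝ) {B : κ' → Set β} (hB : ∀ j, MeasurableSet (B j)) :
    Tendsto (fun i => cov[fun ω => ∑ k ∈ s, c k * (A k).indicator 1 (X i ω),
      fun ω => ∑ j ∈ t, d j * (B j).indicator 1 (Y i ω); μ]) l (𝓝 0) := by
  have hrepr : ∀ i, cov[fun ω => ∑ k ∈ s, c k * (A k).indicator 1 (X i ω),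
      fun ω => ∑ j ∈ t, d j * (B j).indicator 1 (Y i ω); μ]
      = ∑ k ∈ s, ∑ j ∈ t, c k * d j * (μ.real (X i ⁻¹' A k ∩ Y i ⁻¹' B j)
        - μ.real (X i ⁻¹' A k) * μ.real (Y i ⁻¹' B j)) := by
    intro i
    rw [covariance_fun_sum_fun_sum' (X := fun k ω => c k * (A k).indicator 1 (X i ω))
        (Y := fun j ω => d j * (B j).indicator 1 (Y i ω))
      (fun k _ => ((memLp_const (1 : ℝ)).indicator ((hX i) (hA k))).const_mul (c k))
      (fun j _ => ((memLp_const (1 : ℝ)).indicator ((hY i) (hB j))).const_mul (d j))]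
    simp only [covariance_const_mul_left, covariance_const_mul_right,
      covariance_indicator_comp (hX i) (hY i) (hA _) (hB _)]
    exact Finset.sum_congr rfl fun k _ => Finset.sum_congr rfl fun j _ => by ring
  simp_rw [hrepr]
  simpa using tendsto_finsetSum s fun k _ => tendsto_finsetSum t fun j _ =>
    (h (hA k) (hB j)).const_mul (c k * d j)

lemma tendsto_covariance_of_forall_approx {l : Filter ι} {U V : ι → Ω → ℝ}
    (hU : ∀ i, AEStronglyMeasurable (U i) μ) {a : ℝ} (hUa : ∀ i ω, |U i ω| ≤ a)
    (hV : ∀ i, AEStronglyMeasurable (V i) μ) {b : ℝ} (hVb : ∀ i ω, |V i ω| ≤ b)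
    (happrox : ∀ ε > 0, ∃ U' : ι → Ω → ℝ, (∀ i, AEStronglyMeasurable (U' i) μ) ∧
      (∀ i ω, |U i ω - U' i ω| ≤ ε) ∧ Tendsto (fun i => cov[U' i, V i; μ]) l (𝓝 0)) :
    Tendsto (fun i => cov[U i, V i; μ]) l (𝓝 0) := by
  rw [Metric.tendsto_nhds]
  intro δ hδ
  set ε := δ / (4 * (|b| + 1))
  obtain ⟨U', hU'm, hUU', hU'⟩ := happrox ε (by positivity)
  filter_upwards [Metric.tendsto_nhds.1 hU' (δ / 2) (by positivity)] with i hi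
  have hU'a (ω : Ω) : |U' i ω| ≤ a + ε := by
    linarith [abs_sub_abs_le_abs_sub (U' i ω) (U i ω), abs_sub_comm (U' i ω) (U i ω), hUU' i ω,
      hUa i ω]
  have hsplit : cov[U i, V i; μ] = cov[U' i, V i; μ] + cov[U i - U' i, V i; μ] := by
    rw [covariance_sub_left (.of_bound (hU i) a (ae_of_all _ (hUa i)))
      (.of_bound (hU'm i) (a + ε) (ae_of_all _ hU'a)) (.of_bound (hV i) b (ae_of_all _ (hVb i)))]
    ring
  have hdiff := abs_covariance_le_of_forall_abs_le ((hU i).sub (hU'm i)) (hV i) (hUU' i) (hVb i)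
  have hεb : 2 * (ε * b) ≤ δ / 2 := by
    have hε : ε * (|b| + 1) = δ / 4 := by simp only [ε]; field_simp
    nlinarith [le_abs_self b, (by positivity : 0 < ε)]
  rw [Real.dist_eq, sub_zero] at hi ⊢
  rw [hsplit]
  linarith [abs_add_le (cov[U' i, V i; μ]) (cov[U i - U' i, V i; μ])]

lemma tendsto_covariance_comp_of_forall_sum_indicator {l : Filter ι} {Z : ι → Ω → α}
    (hZ : ∀ i, Measurable (Z i)) {f : α → ℝ} (hf : Measurable f) {a : ℝ} (hfa : ∀ x, |f x| ≤ a)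
    {V : ι → Ω → ℝ} (hV : ∀ i, AEStronglyMeasurable (V i) μ) {b : ℝ} (hVb : ∀ i ω, |V i ω| ≤ b)
    (hsimple : ∀ (s : Finset ℤ) (c : ℤ → ℝ) (A : ℤ → Set α), (∀ k, MeasurableSet (A k)) →
      Tendsto (fun i => cov[fun ω => ∑ k ∈ s, c k * (A k).indicator 1 (Z i ω), V i; μ]) l (𝓝 0)) :
    Tendsto (fun i => cov[fun ω => f (Z i ω), V i; μ]) l (𝓝 0) := by
  refine tendsto_covariance_of_forall_approx (fun i => (hf.comp (hZ i)).aestronglyMeasurable)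
    (fun i ω => hfa (Z i ω)) hV hVb fun ε hε => ?_
  obtain ⟨s, c, A, hA, happrox⟩ := exists_sum_indicator_abs_sub_le hf hfa hε
  exact ⟨_, fun i => ((measurable_sum_mul_indicator s c hA).comp (hZ i)).aestronglyMeasurable,
    fun i ω => happrox (Z i ω), hsimple s c A hA⟩

theorem AsymptoticallyIndependent.tendsto_covariance_comp {l : Filter ι}
    {X : ι → Ω → α} {Y : ι → Ω → β} (h : AsymptoticallyIndependent μ l X Y)
    (hX : ∀ i, Measurable (X i)) (hY : ∀ i, Measurable (Y i))
    {f : α → ℝ} (hf : Measurable f) {a : ℝ} (hfa : ∀ x, |f x| ≤ a)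
    {g : β → ℝ} (hg : Measurable g) {b : ℝ} (hgb : ∀ y, |g y| ≤ b) :
    Tendsto (fun i => cov[fun ω => f (X i ω), fun ω => g (Y i ω); μ]) l (𝓝 0) := by
  refine tendsto_covariance_comp_of_forall_sum_indicator hX hf hfa
    (fun i => (hg.comp (hY i)).aestronglyMeasurable) (fun i ω => hgb (Y i ω))
    fun s c A hA => ?_
  simp_rw [covariance_comm (X := fun ω => ∑ k ∈ s, c k * (A k).indicator 1 (X _ ω))]
  refine tendsto_covariance_comp_of_forall_sum_indicator hY hg hgb
    (fun i => ((measurable_sum_mul_indicator s c hA).comp (hX i)).aestronglyMeasurable)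
    (fun i ω => abs_sum_mul_indicator_le s c A (X i ω)) fun t d B hB => ?_
  simp_rw [covariance_comm (X := fun ω => ∑ k ∈ t, d k * (B k).indicator 1 (Y _ ω))]
  exact h.tendsto_covariance_sum_indicator hX hY s c hA t d hB

theorem AsymptoticallyIndependent.tendsto_integral_mul {l : Filter ι}
    {X : ι → Ω → α} {Y : ι → Ω → β} (h : AsymptoticallyIndependent μ l X Y)
    (hX : ∀ i, Measurable (X i)) (hY : ∀ i, Measurable (Y i))
    {f : α → ℝ} (hf : Measurable f) {a : ℝ} (hfa : ∀ x, |f x| ≤ a)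
    {g : β → ℝ} (hg : Measurable g) {b : ℝ} (hgb : ∀ y, |g y| ≤ b) {x y : ℝ}
    (hfx : Tendsto (fun i => ∫ ω, f (X i ω) ∂μ) l (𝓝 x))
    (hgy : Tendsto (fun i => ∫ ω, g (Y i ω) ∂μ) l (𝓝 y)) :
    Tendsto (fun i => ∫ ω, f (X i ω) * g (Y i ω) ∂μ) l (𝓝 (x * y)) := by
  have hsplit : ∀ i, ∫ ω, f (X i ω) * g (Y i ω) ∂μ
      = cov[fun ω => f (X i ω), fun ω => g (Y i ω); μ]
        + (∫ ω, f (X i ω) ∂μ) * ∫ ω, g (Y i ω) ∂μ := by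
    intro i
    rw [covariance_eq_sub (X := fun ω => f (X i ω)) (Y := fun ω => g (Y i ω))
      (.of_bound (hf.comp (hX i)).aestronglyMeasurable a (ae_of_all _ fun ω => hfa _))
      (.of_bound (hg.comp (hY i)).aestronglyMeasurable b (ae_of_all _ fun ω => hgb _))]
    simp
  simp_rw [hsplit]
  simpa using (h.tendsto_covariance_comp hX hY hf hfa hg hgb).add (hfx.mul hgy)

end Covariance

lemma isTightMeasureSet_range_of_tendsto {E : Type*} [MeasurableSpace E] [PseudoMetricSpace E]
    [SecondCountableTopology E] [CompleteSpace E] [BorelSpace E]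
    {P : ℕ → ProbabilityMeasure E} {P₀ : ProbabilityMeasure E}
    (h : Tendsto P atTop (𝓝 P₀)) : IsTightMeasureSet {(P n : Measure E) | n} := by
  have hK := h.isCompact_insert_range
  have hcl : IsCompact (closure (Set.range P)) :=
    hK.of_isClosed_subset isClosed_closure (closure_minimal (Set.subset_insert _ _) hK.isClosed)
  simpa using isTightMeasureSet_of_isCompact_closure hcl

lemma MeasureTheory.ProbabilityMeasure.tendsto_prod_of_isTightMeasureSet {Z T : Type*}
    [MeasurableSpace Z] [TopologicalSpace Z] [PolishSpace Z] [BorelSpace Z]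
    [MeasurableSpace T] [TopologicalSpace T] [PolishSpace T] [BorelSpace T]
    {ι : Type*} {l : Filter ι} {P : ι → ProbabilityMeasure (Z × T)}
    (htight : IsTightMeasureSet {(P i : Measure (Z × T)) | i})
    {μ : ProbabilityMeasure Z} {ν : ProbabilityMeasure T}
    (h : ∀ (f : Z →ᵇ ℝ) (g : T →ᵇ ℝ),
      Tendsto (fun i => ∫ p, f p.1 * g p.2 ∂(P i : Measure (Z × T))) l
        (𝓝 ((∫ z, f z ∂(μ : Measure Z)) * ∫ t, g t ∂(ν : Measure T)))) :
    Tendsto P l (𝓝 (μ.prod ν)) := by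
  refine (Filter.tendsto_iff_ultrafilter _ _ _).2 fun U hU => ?_
  have hcompact : IsCompact (closure (Set.range P)) :=
    isCompact_closure_of_isTightMeasureSet (by simpa using htight)
  obtain ⟨π, -, hπ : Tendsto P U (𝓝 π)⟩ := hcompact.ultrafilter_le_nhds (U.map P)
    ((by simp : (U.map P : Filter _) ≤ 𝓟 (Set.range P)).trans (monotone_principal subset_closure))
  suffices π = μ.prod ν by rwa [← this]
  rw [ProbabilityMeasure.tendsto_iff_forall_integral_tendsto] at hπ
  refine ProbabilityMeasure.toMeasure_injective
    (Measure.eq_prod_of_integral_mul_boundedContinuousFunction fun f g => ?_)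
  refine tendsto_nhds_unique ?_ ((h f g).comp hU)
  exact hπ (f.compContinuous ⟨Prod.fst, continuous_fst⟩ *
    g.compContinuous ⟨Prod.snd, continuous_snd⟩)

lemma tendstoInDistribution_iff_forall_integral_tendsto {Ω Ω' E ι : Type*} [MeasurableSpace Ω]
    [MeasurableSpace Ω'] [MeasurableSpace E] [TopologicalSpace E] [OpensMeasurableSpace E]
    {μ : Measure Ω} [IsProbabilityMeasure μ] {μ' : Measure Ω'} [IsProbabilityMeasure μ']
    {X : ι → Ω → E} {Z : Ω' → E} {l : Filter ι} (hX : ∀ i, AEMeasurable (X i) μ)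
    (hZ : AEMeasurable Z μ') :
    TendstoInDistribution X l Z (fun _ => μ) μ' ↔
      ∀ f : E →ᵇ ℝ, Tendsto (fun i => ∫ ω, f (X i ω) ∂μ) l (𝓝 (∫ ω, f (Z ω) ∂μ')) := by
  refine ⟨fun h f => ?_, fun h => ⟨hX, hZ, ?_⟩⟩
  · simpa only [ProbabilityMeasure.coe_mk, integral_map (hX _) f.continuous.aestronglyMeasurable,
      integral_map hZ f.continuous.aestronglyMeasurable] using
      ProbabilityMeasure.tendsto_iff_forall_integral_tendsto.1 h.tendsto f
  · refine ProbabilityMeasure.tendsto_iff_forall_integral_tendsto.2 fun f => ?_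
    simpa only [ProbabilityMeasure.coe_mk, integral_map (hX _) f.continuous.aestronglyMeasurable,
      integral_map hZ f.continuous.aestronglyMeasurable] using h f

lemma MeasureTheory.TendstoInDistribution.isTightMeasureSet_map_prodMk {Ω Ω' Ω'' Z T : Type*}
    [MeasurableSpace Ω] [MeasurableSpace Ω'] [MeasurableSpace Ω'']
    {μ : Measure Ω} [IsProbabilityMeasure μ] {μ' : Measure Ω'} [IsProbabilityMeasure μ']
    {μ'' : Measure Ω''} [IsProbabilityMeasure μ'']
    [MeasurableSpace Z] [PseudoMetricSpace Z] [SecondCountableTopology Z] [CompleteSpace Z]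
    [BorelSpace Z]
    [MeasurableSpace T] [PseudoMetricSpace T] [SecondCountableTopology T] [CompleteSpace T]
    [BorelSpace T]
    {X : ℕ → Ω → Z} {Y : ℕ → Ω → T} {X' : Ω' → Z} {Y' : Ω'' → T}
    (hX : TendstoInDistribution X atTop X' (fun _ => μ) μ')
    (hY : TendstoInDistribution Y atTop Y' (fun _ => μ) μ'') :
    IsTightMeasureSet {μ.map (fun ω => (X n ω, Y n ω)) | n} := by
  refine .prodMk ?_ ?_
  · convert isTightMeasureSet_range_of_tendsto hX.tendsto using 1
    ext
    simp [Measure.fst_map_prodMk₀ (hY.forall_aemeasurable _)]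
  · convert isTightMeasureSet_range_of_tendsto hY.tendsto using 1
    ext
    simp [Measure.snd_map_prodMk₀ (hX.forall_aemeasurable _)]

theorem AsymptoticallyIndependent.tendstoInDistribution_prodMk {Ω Z T : Type*} [MeasurableSpace Ω]
    {μ : Measure Ω} [IsProbabilityMeasure μ]
    [MeasurableSpace Z] [MetricSpace Z] [SecondCountableTopology Z] [CompleteSpace Z]
    [BorelSpace Z]
    [MeasurableSpace T] [MetricSpace T] [SecondCountableTopology T] [CompleteSpace T]
    [BorelSpace T]
    {X : ℕ → Ω → Z} {Y : ℕ → Ω → T} (hXY : AsymptoticallyIndependent μ atTop X Y)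
    (hX : ∀ n, Measurable (X n)) (hY : ∀ n, Measurable (Y n))
    {νX : Measure Z} {νY : Measure T} [IsProbabilityMeasure νX] [IsProbabilityMeasure νY]
    (hXd : TendstoInDistribution X atTop id (fun _ => μ) νX)
    (hYd : TendstoInDistribution Y atTop id (fun _ => μ) νY) :
    TendstoInDistribution (fun n ω => (X n ω, Y n ω)) atTop id (fun _ => μ) (νX.prod νY) := by
  have hXYm n : AEMeasurable (fun ω => (X n ω, Y n ω)) μ := ((hX n).prodMk (hY n)).aemeasurable
  let P n : ProbabilityMeasure (Z × T) := ⟨_, Measure.isProbabilityMeasure_map (hXYm n)⟩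
  have hP : Tendsto P atTop
      (𝓝 (ProbabilityMeasure.prod ⟨νX, inferInstance⟩ ⟨νY, inferInstance⟩)) := by
    refine ProbabilityMeasure.tendsto_prod_of_isTightMeasureSet
      (by simpa only [P, ProbabilityMeasure.coe_mk] using hXd.isTightMeasureSet_map_prodMk hYd)
      fun f g => ?_
    refine (hXY.tendsto_integral_mul hX hY f.continuous.measurable
      (fun x => by simpa using f.norm_coe_le_norm x) g.continuous.measurable
      (fun y => by simpa using g.norm_coe_le_norm y)
      ((tendstoInDistribution_iff_forall_integral_tendsto (fun n => (hX n).aemeasurable)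
        aemeasurable_id).1 hXd f)
      ((tendstoInDistribution_iff_forall_integral_tendsto (fun n => (hY n).aemeasurable)
        aemeasurable_id).1 hYd g)).congr fun n => ?_
    rw [ProbabilityMeasure.coe_mk,
      integral_map (f := fun p : Z × T => f p.1 * g p.2) (hXYm n) (by fun_prop)]
  refine ⟨hXYm, aemeasurable_id, ?_⟩
  convert hP using 2
  simp only [Measure.map_id]
  rfl

/-- if X_n → νX in distribution, Y_n → νY in distribution, and X_n and Y_n
are asymptotically independent (the mixing-type coefficient over Borel sets tends to 0),
then (X_n, Y_n) converges in distribution to the product νX ⊗ νY, and consequently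
X_n Y_n converges in distribution to the law of the product of independent coordinates. -/
theorem stmt14 {Ω : Type*} [MeasurableSpace Ω] (μ : Measure Ω) [IsProbabilityMeasure μ]
    (X Y : ℕ → Ω → ℝ) (νX νY : Measure ℝ)
    [IsProbabilityMeasure νX] [IsProbabilityMeasure νY]
    (hXmeas : ∀ n, Measurable (X n)) (hYmeas : ∀ n, Measurable (Y n))
    (hXd : ∀ f : ℝ →ᵇ ℝ,
      Tendsto (fun n => ∫ ω, f (X n ω) ∂μ) atTop (𝓝 (∫ x, f x ∂νX)))
    (hYd : ∀ f : ℝ →ᵇ ℝ,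
      Tendsto (fun n => ∫ ω, f (Y n ω) ∂μ) atTop (𝓝 (∫ x, f x ∂νY)))
    (hai : ∀ ε > (0 : ℝ), ∃ N : ℕ, ∀ n ≥ N, ∀ A B : Set ℝ,
      MeasurableSet A → MeasurableSet B →
        |(μ ((X n) ⁻¹' A ∩ (Y n) ⁻¹' B)).toReal
          - (μ ((X n) ⁻¹' A)).toReal * (μ ((Y n) ⁻¹' B)).toReal| ≤ ε) :
    (∀ f : (ℝ × ℝ) →ᵇ ℝ,
      Tendsto (fun n => ∫ ω, f (X n ω, Y n ω) ∂μ) atTop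
        (𝓝 (∫ p, f p ∂(νX.prod νY)))) ∧
    (∀ g : ℝ →ᵇ ℝ,
      Tendsto (fun n => ∫ ω, g (X n ω * Y n ω) ∂μ) atTop
        (𝓝 (∫ p : ℝ × ℝ, g (p.1 * p.2) ∂(νX.prod νY)))) := by
  have hXY : AsymptoticallyIndependent μ atTop X Y := fun A B hA hB =>
    Metric.tendsto_atTop.2 fun ε hε => (hai (ε / 2) (half_pos hε)).imp fun N hN n hn => by
      rw [Real.dist_eq, sub_zero]
      exact (hN n hn A B hA hB).trans_lt (half_lt_self hε)
  have hXd' : TendstoInDistribution X atTop id (fun _ => μ) νX :=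
    (tendstoInDistribution_iff_forall_integral_tendsto (fun n => (hXmeas n).aemeasurable)
      aemeasurable_id).2 hXd
  have hYd' : TendstoInDistribution Y atTop id (fun _ => μ) νY :=
    (tendstoInDistribution_iff_forall_integral_tendsto (fun n => (hYmeas n).aemeasurable)
      aemeasurable_id).2 hYd
  have hpair := hXY.tendstoInDistribution_prodMk hXmeas hYmeas hXd' hYd'
  have hprod := hpair.continuous_comp (continuous_fst.mul continuous_snd)
  exact ⟨(tendstoInDistribution_iff_forall_integral_tendsto hpair.forall_aemeasurable
      aemeasurable_id).1 hpair,
    (tendstoInDistribution_iff_forall_integral_tendsto hprod.forall_aemeasurable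
      hprod.aemeasurable_limit).1 hprod⟩
end

section
/- In the explosive PAR(1) model with |φ| > 1, conditionally on the event {X_0 + ζ ≠ 0}, the least squares estimator â_r = (∑_{j=0}^{n-1} X_{jP+r-1} X_{jP+r}) / (∑_{j=0}^{n-1} X_{jP+r-1}²) converges almost surely to a_r as n → ∞, for each r = 1,…,P. -/
/-!
Over one period the model is the scalar AR(1) recursion `X_{(l+1)P} = φ X_{lP} + U_l`, so
`X_{lP} / φ^l = X_0 + Z_{l-1} → X_0 + ζ`. Periodically distributed innovations have bounded
second moments, so `∑_l E[(u_{lP+s} / φ^l)²] < ∞` and `u_{lP+s} / φ^l → 0` almost surely. Hence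
`x_j = X_{jP+r-1}` satisfies `x_j / φ^j → A_1^{r-1} (X_0 + ζ) ≠ 0`. As
`X_{jP+r} = a_r x_j + u_{jP+r}`, the estimator is `a_r + ∑ x_j u_{jP+r} / ∑ x_j²`, and after
division by `φ^{2n}` both sums are Toeplitz averages `∑_j φ^{2(j-n)} s_j` of convergent sequences:
the denominator tends to `A² (X_0 + ζ)² / (φ² - 1) ≠ 0` and the cross term to `0`.
-/

open MeasureTheory Filter Topology ProbabilityTheory Finset

theorem tendsto_sum_pow_mul_div_pow {q : ℝ} (hq : 1 < q) {s : ℕ → ℝ} {T : ℝ}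
    (hs : Tendsto s atTop (𝓝 T)) :
    Tendsto (fun n => (∑ j ∈ range n, q ^ j * s j) / q ^ n) atTop (𝓝 (T / (q - 1))) := by
  have hq0 : 0 < q := one_pos.trans hq
  have hqinv : q⁻¹ < 1 := inv_lt_one_of_one_lt₀ hq
  obtain ⟨B, hB⟩ : ∃ B, ∀ j, |s j| ≤ B := by
    obtain ⟨B, hB⟩ := hs.abs.bddAbove_range
    exact ⟨B, fun j => hB ⟨j, rfl⟩⟩
  -- `q⁻ⁿ ∑_{j<n} q^j s_j = ∑_{i<n} q^{-(i+1)} s_{n-1-i}`, a series for Tannery's theorem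
  set f : ℕ → ℕ → ℝ := fun n i => if i < n then q⁻¹ ^ (i + 1) * s (n - 1 - i) else 0
  have hf : ∀ n, (∑ j ∈ range n, q ^ j * s j) / q ^ n = ∑' i, f n i := by
    intro n
    rw [tsum_eq_sum (s := range n) fun i hi => if_neg (by simpa using hi), ← sum_range_reflect,
      sum_div]
    refine sum_congr rfl fun i hi => ?_
    obtain ⟨k, rfl⟩ : ∃ k, n = k + i + 1 := ⟨n - 1 - i, by have := mem_range.mp hi; omega⟩
    rw [if_pos (by omega), show k + i + 1 - 1 - i = k by omega, add_assoc, pow_add, inv_pow]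
    field_simp
  have hlim : ∀ i, Tendsto (fun n => f n i) atTop (𝓝 (q⁻¹ ^ (i + 1) * T)) := by
    intro i
    have hshift : Tendsto (fun n => s (n - 1 - i)) atTop (𝓝 T) := by
      simpa only [Function.comp_def, Nat.sub_sub] using hs.comp (tendsto_sub_atTop_nat (1 + i))
    refine (hshift.const_mul _).congr' ?_
    filter_upwards [eventually_gt_atTop i] with n hn
    simp only [f, if_pos hn]
  have hbound : ∀ n i, ‖f n i‖ ≤ q⁻¹ ^ (i + 1) * B := by
    intro n i
    simp only [f]
    split_ifs
    · rw [norm_mul, norm_pow, norm_inv, Real.norm_of_nonneg hq0.le, Real.norm_eq_abs]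
      exact mul_le_mul_of_nonneg_left (hB _) (by positivity)
    · rw [norm_zero]
      exact mul_nonneg (by positivity) ((abs_nonneg _).trans (hB 0))
  have hgeom : ∀ C, HasSum (fun i => q⁻¹ ^ (i + 1) * C) (C / (q - 1)) := by
    intro C
    have hq1 : q - 1 ≠ 0 := by linarith
    have h := (hasSum_geometric_of_lt_one (by positivity) hqinv).mul_left (q⁻¹ * C)
    rw [show q⁻¹ * C * (1 - q⁻¹)⁻¹ = C / (q - 1) by field_simp] at h
    simpa only [pow_succ', mul_comm, mul_assoc] using h
  rw [← (hgeom T).tsum_eq, funext hf]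
  exact tendsto_tsum_of_dominated_convergence (hgeom B).summable hlim (Eventually.of_forall hbound)

theorem tendsto_sum_mul_div_sum_sq_of_explosive {φ c L : ℝ} (hφ : 1 < |φ|) {x y e : ℕ → ℝ}
    (hy : ∀ j, y j = c * x j + e j) (hx : Tendsto (fun j => x j / φ ^ j) atTop (𝓝 L))
    (hL : L ≠ 0) (he : Tendsto (fun j => e j / φ ^ j) atTop (𝓝 0)) :
    Tendsto (fun n => (∑ j ∈ range n, x j * y j) / ∑ j ∈ range n, x j ^ 2) atTop (𝓝 c) := by
  have hq : 1 < φ ^ 2 := (one_lt_sq_iff_one_lt_abs φ).mpr hφ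
  have hφ0 : φ ≠ 0 := by rintro rfl; norm_num at hφ
  have hden : Tendsto (fun n => (∑ j ∈ range n, x j ^ 2) / (φ ^ 2) ^ n) atTop
      (𝓝 (L ^ 2 / (φ ^ 2 - 1))) := by
    refine (tendsto_sum_pow_mul_div_pow hq (hx.pow 2)).congr fun n => ?_
    congr 1
    refine sum_congr rfl fun j _ => ?_
    field_simp
    ring
  have hcross : Tendsto (fun n => (∑ j ∈ range n, x j * e j) / (φ ^ 2) ^ n) atTop (𝓝 0) := by
    have := tendsto_sum_pow_mul_div_pow hq (hx.mul he)
    rw [mul_zero, zero_div] at this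
    refine this.congr fun n => ?_
    congr 1
    refine sum_congr rfl fun j _ => ?_
    field_simp
    ring
  have hK : L ^ 2 / (φ ^ 2 - 1) ≠ 0 := div_ne_zero (pow_ne_zero 2 hL) (by linarith)
  have hnum := (hden.const_mul c).add hcross
  rw [add_zero] at hnum
  have := hnum.div hden hK
  rw [mul_div_assoc, div_self hK, mul_one] at this
  refine this.congr fun n => ?_
  rw [Pi.div_apply, ← mul_div_assoc, ← add_div,
    div_div_div_cancel_right₀ (pow_ne_zero n (by positivity)), mul_sum, ← sum_add_distrib]
  congr 1
  refine sum_congr rfl fun j _ => ?_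
  rw [hy]
  ring

theorem tendsto_div_pow_of_affine_rec {φ ζ : ℝ} (hφ : φ ≠ 0) {w V : ℕ → ℝ}
    (hw : ∀ l, w (l + 1) = φ * w l + V l)
    (hζ : Tendsto (fun n => ∑ l ∈ range (n + 1), (φ ^ (l + 1))⁻¹ * V l) atTop (𝓝 ζ)) :
    Tendsto (fun n => w n / φ ^ n) atTop (𝓝 (w 0 + ζ)) := by
  have hsum : ∀ n, w n / φ ^ n = w 0 + ∑ l ∈ range n, (φ ^ (l + 1))⁻¹ * V l := by
    intro n
    induction n with
    | zero => simp
    | succ n ih =>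
      rw [sum_range_succ, ← add_assoc, ← ih, hw, pow_succ]
      field_simp
  rw [← tendsto_add_atTop_iff_nat 1]
  simpa only [hsum] using tendsto_const_nhds.add hζ

section PeriodicRecursion

variable {P : ℕ} {a X u : ℕ → ℝ}

theorem Function.Periodic.apply_mul_add {β : Type*} {f : ℕ → β} (hf : Function.Periodic f P)
    (l s : ℕ) : f (l * P + s) = f s := by
  rw [add_comm]
  exact hf.nat_mul l s

theorem eq_prod_mul_add_sum_of_periodic (hper : Function.Periodic a P)
    (hrec : ∀ k, X (k + 1) = a (k + 1) * X k + u (k + 1)) (l m : ℕ) :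
    X (l * P + m) = (∏ s ∈ Icc 1 m, a s) * X (l * P)
      + ∑ s ∈ Icc 1 m, (∏ t ∈ Icc (s + 1) m, a t) * u (l * P + s) := by
  induction m with
  | zero => simp
  | succ m ih =>
    have hstep : ∀ s ∈ Icc 1 m, (∏ t ∈ Icc (s + 1) (m + 1), a t) * u (l * P + s)
        = a (m + 1) * ((∏ t ∈ Icc (s + 1) m, a t) * u (l * P + s)) := by
      intro s hs
      rw [prod_Icc_succ_top (by have := (mem_Icc.mp hs).2; omega)]
      ring
    rw [← add_assoc, hrec, ih, add_assoc, hper.apply_mul_add, prod_Icc_succ_top (by omega),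
      sum_Icc_succ_top (by omega), sum_congr rfl hstep, ← mul_sum,
      Icc_eq_empty_of_lt (Nat.lt_succ_self (m + 1)), prod_empty]
    ring

theorem tendsto_div_pow_add_of_periodic {φ c : ℝ} (hper : Function.Periodic a P)
    (hrec : ∀ k, X (k + 1) = a (k + 1) * X k + u (k + 1))
    (hX : Tendsto (fun l => X (l * P) / φ ^ l) atTop (𝓝 c))
    (hu : ∀ s, Tendsto (fun l => u (l * P + s) / φ ^ l) atTop (𝓝 0)) (m : ℕ) :
    Tendsto (fun l => X (l * P + m) / φ ^ l) atTop (𝓝 ((∏ s ∈ Icc 1 m, a s) * c)) := by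
  have hnoise := tendsto_finsetSum (Icc 1 m) fun s _ =>
    (hu s).const_mul (∏ t ∈ Icc (s + 1) m, a t)
  simp only [mul_zero, sum_const_zero] at hnoise
  simpa only [eq_prod_mul_add_sum_of_periodic hper hrec, add_div, sum_div, mul_div_assoc,
    add_zero] using (hX.const_mul _).add hnoise

end PeriodicRecursion

section Innovations

variable {Ω : Type*} [MeasurableSpace Ω] {μ : Measure Ω}

theorem identDistrib_mul_add_of_map_eq {β : Type*} [MeasurableSpace β] {P : ℕ} {u : ℕ → Ω → β}
    (hu : ∀ k, Measurable (u k))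
    (hpd : ∀ m : ℕ, Measure.map (fun ω => fun i : Fin m => u ((i : ℕ) + P) ω) μ
      = Measure.map (fun ω => fun i : Fin m => u (i : ℕ) ω) μ) (j k : ℕ) :
    IdentDistrib (u (j * P + k)) (u k) μ μ := by
  have hshift : ∀ k, IdentDistrib (u (k + P)) (u k) μ μ := by
    intro k
    refine ⟨(hu _).aemeasurable, (hu _).aemeasurable, ?_⟩
    have h := congrArg (Measure.map fun g : Fin (k + 1) → β => g (Fin.last k)) (hpd (k + 1))
    rwa [Measure.map_map (measurable_pi_apply _) (measurable_pi_lambda _ fun _ => hu _),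
      Measure.map_map (measurable_pi_apply _) (measurable_pi_lambda _ fun _ => hu _)] at h
  induction j with
  | zero => simpa using IdentDistrib.refl (hu k).aemeasurable
  | succ j ih => rw [add_one_mul, add_right_comm]; exact (hshift _).trans ih

theorem ae_tendsto_zero_of_summable_integral {f : ℕ → Ω → ℝ} (hf : ∀ j, 0 ≤ f j)
    (hfi : ∀ j, Integrable (f j) μ) (hs : Summable fun j => ∫ ω, f j ω ∂μ) :
    ∀ᵐ ω ∂μ, Tendsto (fun j => f j ω) atTop (𝓝 0) := by
  have hmeas : ∀ j, AEMeasurable (fun ω => ENNReal.ofReal (f j ω)) μ :=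
    fun j => (hfi j).aemeasurable.ennreal_ofReal
  have hfin : ∫⁻ ω, ∑' j, ENNReal.ofReal (f j ω) ∂μ ≠ ⊤ := by
    rw [lintegral_tsum hmeas]
    simp_rw [← ofReal_integral_eq_lintegral_ofReal (hfi _) (Eventually.of_forall (hf _))]
    rw [← ENNReal.ofReal_tsum_of_nonneg (fun j => integral_nonneg (hf j)) hs]
    exact ENNReal.ofReal_ne_top
  filter_upwards [ae_lt_top' (AEMeasurable.tsum hmeas) hfin] with ω hω
  have h := (ENNReal.tendsto_toReal ENNReal.zero_ne_top).comp
    (ENNReal.tendsto_atTop_zero_of_tsum_ne_top hω.ne)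
  simpa only [Function.comp_def, ENNReal.toReal_ofReal (hf _ ω), ENNReal.toReal_zero] using h

theorem ae_tendsto_div_pow_zero {v : ℕ → Ω → ℝ} {φ C : ℝ} (hφ : 1 < |φ|)
    (hv : ∀ j, MemLp (v j) 2 μ) (hC : ∀ j, ∫ ω, v j ω ^ 2 ∂μ ≤ C) :
    ∀ᵐ ω ∂μ, Tendsto (fun j => v j ω / φ ^ j) atTop (𝓝 0) := by
  have hq : 1 < φ ^ 2 := (one_lt_sq_iff_one_lt_abs φ).mpr hφ
  have hsq : ∀ j ω, (v j ω / φ ^ j) ^ 2 = v j ω ^ 2 * ((φ ^ 2)⁻¹) ^ j := by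
    intro j ω
    rw [div_pow, ← pow_mul, mul_comm j, pow_mul, inv_pow, div_eq_mul_inv]
  have hint : ∀ j, Integrable (fun ω => (v j ω / φ ^ j) ^ 2) μ := fun j => by
    simpa only [hsq] using (hv j).integrable_sq.mul_const _
  have hsum : Summable fun j => ∫ ω, (v j ω / φ ^ j) ^ 2 ∂μ := by
    refine Summable.of_nonneg_of_le (fun j => integral_nonneg fun ω => sq_nonneg _) (fun j => ?_)
      ((summable_geometric_of_lt_one (by positivity) (inv_lt_one_of_one_lt₀ hq)).mul_left C)
    simp only [hsq, integral_mul_const]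
    exact mul_le_mul_of_nonneg_right (hC j) (by positivity)
  filter_upwards [ae_tendsto_zero_of_summable_integral (fun j ω => sq_nonneg _) hint hsum]
    with ω hω
  rw [tendsto_zero_iff_abs_tendsto_zero]
  simpa only [Function.comp_def, Real.sqrt_sq_eq_abs, Real.sqrt_zero] using hω.sqrt

end Innovations

theorem stmt15_general {Ω : Type*} [MeasurableSpace Ω] (μ : Measure Ω)
    (P : ℕ) (a : ℕ → ℝ) (hper : ∀ k, a (k + P) = a k)
    (φ : ℝ) (hφdef : φ = ∏ j ∈ Finset.Icc 1 P, a j) (hφ : 1 < |φ|)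
    (u : ℕ → Ω → ℝ) (humeas : ∀ k, Measurable (u k)) (huL2 : ∀ k, MemLp (u k) 2 μ)
    (hpd : ∀ m : ℕ,
      Measure.map (fun ω => fun i : Fin m => u ((i : ℕ) + P) ω) μ
        = Measure.map (fun ω => fun i : Fin m => u (i : ℕ) ω) μ)
    (X : ℕ → Ω → ℝ)
    (hrec : ∀ k ω, X (k + 1) ω = a (k + 1) * X k ω + u (k + 1) ω)
    (U : ℕ → ℕ → Ω → ℝ)
    (hU : ∀ n r ω, U n r ω
      = ∑ s ∈ Finset.Icc 1 r, (∏ j ∈ Finset.Icc (s + 1) r, a j) * u (n * P + s) ω)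
    (Z : ℕ → Ω → ℝ)
    (hZ : ∀ n ω, Z n ω = ∑ l ∈ Finset.range (n + 1), (φ ^ (l + 1))⁻¹ * U l P ω)
    (ζ : Ω → ℝ)
    (hζ : ∀ᵐ ω ∂μ, Tendsto (fun n => Z n ω) atTop (𝓝 (ζ ω))) :
    ∀ r : ℕ, 1 ≤ r → r ≤ P →
      ∀ᵐ ω ∂μ, X 0 ω + ζ ω ≠ 0 →
        Tendsto (fun n =>
            (∑ j ∈ Finset.range n, X (j * P + r - 1) ω * X (j * P + r) ω)
              / ∑ j ∈ Finset.range n, (X (j * P + r - 1) ω) ^ 2)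
          atTop (𝓝 (a r)) := by
  intro r hr1 hrP
  have hφ0 : φ ≠ 0 := by rintro rfl; norm_num at hφ
  have hA : ∏ s ∈ Icc 1 (r - 1), a s ≠ 0 :=
    ne_zero_of_dvd_ne_zero (hφdef ▸ hφ0)
      (prod_dvd_prod_of_subset _ _ _ (Icc_subset_Icc_right (by omega)))
  have hnoise : ∀ s, ∀ᵐ ω ∂μ, Tendsto (fun j => u (j * P + s) ω / φ ^ j) atTop (𝓝 0) :=
    fun s => ae_tendsto_div_pow_zero hφ (fun j => huL2 _)
      fun j => ((identDistrib_mul_add_of_map_eq humeas hpd j s).sq.integral_eq).le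
  filter_upwards [hζ, ae_all_iff.mpr hnoise] with ω hZω hnoiseω hc
  have hrecω : ∀ k, X (k + 1) ω = a (k + 1) * X k ω + u (k + 1) ω := fun k => hrec k ω
  have hperiod : Tendsto (fun l => X (l * P) ω / φ ^ l) atTop (𝓝 (X 0 ω + ζ ω)) := by
    have hstep : ∀ l, X ((l + 1) * P) ω = φ * X (l * P) ω + U l P ω := fun l => by
      rw [add_one_mul, eq_prod_mul_add_sum_of_periodic (X := fun k => X k ω)
        (u := fun k => u k ω) hper hrecω, hφdef, hU]
    simpa only [zero_mul] using tendsto_div_pow_of_affine_rec (w := fun l => X (l * P) ω) hφ0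
      hstep (by simpa only [hZ] using hZω)
  have hr : ∀ j, j * P + r - 1 = j * P + (r - 1) := fun j => by omega
  refine tendsto_sum_mul_div_sum_sq_of_explosive hφ (e := fun j => u (j * P + r) ω)
    (fun j => ?_) ?_ (mul_ne_zero hA hc) (hnoiseω r)
  · rw [hr, show j * P + r = j * P + (r - 1) + 1 by omega, hrecω, add_assoc,
      Nat.sub_add_cancel hr1, Function.Periodic.apply_mul_add hper]
  · simpa only [hr] using tendsto_div_pow_add_of_periodic (X := fun k => X k ω)
      (u := fun k => u k ω) hper hrecω hperiod hnoiseω (r - 1)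

/-- strong consistency, Theorem 1: conditionally on {X_0 + ζ ≠ 0},
the least squares estimator â_r converges almost surely to a_r. -/
theorem stmt15 {Ω : Type*} [MeasurableSpace Ω] (μ : Measure Ω) [IsProbabilityMeasure μ]
    (P : ℕ) (hP : 1 ≤ P) (a : ℕ → ℝ) (hper : ∀ k, a (k + P) = a k)
    (φ : ℝ) (hφdef : φ = ∏ j ∈ Finset.Icc 1 P, a j) (hφ : 1 < |φ|)
    (u : ℕ → Ω → ℝ) (humeas : ∀ k, Measurable (u k)) (huL2 : ∀ k, MemLp (u k) 2 μ)
    (hucent : ∀ k, ∫ ω, u k ω ∂μ = 0)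
    (hpd : ∀ m : ℕ,
      Measure.map (fun ω => fun i : Fin m => u ((i : ℕ) + P) ω) μ
        = Measure.map (fun ω => fun i : Fin m => u (i : ℕ) ω) μ)
    (X : ℕ → Ω → ℝ) (hX0 : MemLp (X 0) 2 μ)
    (hrec : ∀ k ω, X (k + 1) ω = a (k + 1) * X k ω + u (k + 1) ω)
    (U : ℕ → ℕ → Ω → ℝ)
    (hU : ∀ n r ω, U n r ω
      = ∑ s ∈ Finset.Icc 1 r, (∏ j ∈ Finset.Icc (s + 1) r, a j) * u (n * P + s) ω)
    (Z : ℕ → Ω → ℝ)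
    (hZ : ∀ n ω, Z n ω = ∑ l ∈ Finset.range (n + 1), (φ ^ (l + 1))⁻¹ * U l P ω)
    (ζ : Ω → ℝ)
    (hζ : ∀ᵐ ω ∂μ, Tendsto (fun n => Z n ω) atTop (𝓝 (ζ ω))) :
    ∀ r : ℕ, 1 ≤ r → r ≤ P →
      ∀ᵐ ω ∂μ, X 0 ω + ζ ω ≠ 0 →
        Tendsto (fun n =>
            (∑ j ∈ Finset.range n, X (j * P + r - 1) ω * X (j * P + r) ω)
              / ∑ j ∈ Finset.range n, (X (j * P + r - 1) ω) ^ 2)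
          atTop (𝓝 (a r)) :=
  stmt15_general μ P a hper φ hφdef hφ u humeas huL2 hpd X hrec U hU Z hZ ζ hζ
end
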